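/- arXiv:1403.4452 — 9 statements merged into one kernel-verified Lean document; each statement's English description precedes it below -/
import Mathlib

section
/- Let R be a finite ring with Jacobson radical J, and let S = R/J be the quotient ring, regarded also as a left R-module via the quotient map. Suppose ψ : soc(R) → S is an isomorphism of left R-modules, where soc(R) is the socle of R as a left R-module. If ω̃ : S → ℝ is a normalized homogeneous weight on the ring S, then the function ω : R → ℝ defined by ω(x) = ω̃(ψ(x)) for x ∈ soc(R) and ω(x) = 1 for x ∉ soc(R) is a normalized homogeneous weight on R. -/
/-- The principal left ideal generated by `x`, as a set: `{r * x : r ∈ R}`. -/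
def leftOrbit {R : Type*} [Ring R] (x : R) : Set R := {z | ∃ r : R, z = r * x}

/-- `ω` is a normalized homogeneous weight on the finite ring `R`:
`ω 0 = 0`; `ω` is constant on generators of the same principal left ideal; and for every
nonzero `x`, the sum of `ω` over `Rx` equals the cardinality of `Rx`. -/
def IsNormHomWeight {R : Type*} [Ring R] [Finite R] (ω : R → ℝ) : Prop :=
  ω 0 = 0 ∧
  (∀ x y : R, leftOrbit x = leftOrbit y → ω x = ω y) ∧
  (∀ x : R, x ≠ 0 →
    ∑ y ∈ (Set.toFinite (leftOrbit x)).toFinset, ω y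
      = ((Set.toFinite (leftOrbit x)).toFinset.card : ℝ))

/-- The socle of `R` as a left module over itself: the supremum of the atoms of the lattice
of left ideals. -/
def ringSocle (R : Type*) [Ring R] : Submodule R R := sSup {m : Submodule R R | IsAtom m}

lemma leftOrbit_eq_span {R : Type*} [Ring R] (x : R) :
    leftOrbit x = (Submodule.span R {x} : Set R) := by
  ext z
  simp only [leftOrbit, Set.mem_setOf_eq, SetLike.mem_coe, Submodule.mem_span_singleton,
    smul_eq_mul]
  exact ⟨fun ⟨r, h⟩ => ⟨r, h.symm⟩, fun ⟨r, h⟩ => ⟨r, h.symm⟩⟩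

lemma ideal_eq_leftOrbit {S : Type*} [Ring S] [IsSemisimpleRing S] (I : Ideal S) (hI : I ≠ ⊥) :
    ∃ e : S, e ≠ 0 ∧ leftOrbit e = (I : Set S) := by
  obtain ⟨C, hC⟩ := exists_isCompl I
  have h1 : (1 : S) ∈ I ⊔ C := by
    rw [codisjoint_iff.mp hC.codisjoint]; exact Submodule.mem_top
  obtain ⟨e, he, f, hf, hef⟩ := Submodule.mem_sup.mp h1
  have key : ∀ a ∈ I, a = a * e := by
    intro a ha
    have hsum : a * e + a * f = a := by rw [← mul_add, hef, mul_one]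
    have hafI : a * f ∈ I := by
      have : a * f = a - a * e := eq_sub_of_add_eq' hsum
      rw [this]
      exact sub_mem ha (I.smul_mem a he)
    have hafC : a * f ∈ C := C.smul_mem a hf
    have haf0 : a * f = 0 := (Submodule.disjoint_def.mp hC.disjoint) _ hafI hafC
    rw [haf0, add_zero] at hsum
    exact hsum.symm
  have he0 : e ≠ 0 := by
    obtain ⟨b, hbI, hb0⟩ := Submodule.exists_mem_ne_zero_of_ne_bot hI
    intro h
    exact hb0 (by rw [key b hbI, h, mul_zero])
  refine ⟨e, he0, ?_⟩
  ext z
  constructor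
  · rintro ⟨r, rfl⟩
    exact I.smul_mem r he
  · intro hz
    exact ⟨z, key z hz⟩

lemma sum_weight_ideal {S : Type*} [Ring S] [Finite S] [IsSemisimpleRing S]
    (ω' : S → ℝ) (hω' : IsNormHomWeight ω') (I : Ideal S) (hI : I ≠ ⊥) :
    ∑ y ∈ (Set.toFinite (I : Set S)).toFinset, ω' y
      = ((Set.toFinite (I : Set S)).toFinset.card : ℝ) := by
  obtain ⟨e, he0, heI⟩ := ideal_eq_leftOrbit I hI
  have hfs : (Set.toFinite (leftOrbit e)).toFinset = (Set.toFinite (I : Set S)).toFinset := by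
    ext s
    simp only [Set.Finite.mem_toFinset]
    rw [heI]
  have h := hω'.2.2 e he0
  rwa [hfs] at h

open Classical in
theorem homogeneous_weight_from_quotient
    {R S : Type*} [Ring R] [Finite R] [Ring S] [Finite S]
    (π : R →+* S) (hπ : Function.Surjective π)
    (hker : RingHom.ker π = (⊥ : Ideal R).jacobson)
    (ψ : ringSocle R ≃+ S)
    (hψ : ∀ (r : R) (x : ringSocle R), ψ (r • x) = π r * ψ x)
    (ω' : S → ℝ) (hω' : IsNormHomWeight ω')
    (ω : R → ℝ)
    (hω : ∀ x : R, ω x = if h : x ∈ ringSocle R then ω' (ψ ⟨x, h⟩) else 1) :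
    IsNormHomWeight ω := by
  haveI : RingHomSurjective π := ⟨hπ⟩
  -- the semilinear map induced by ψ
  let l : ringSocle R →ₛₗ[π] S :=
    { toFun := ψ
      map_add' := fun a b => map_add ψ a b
      map_smul' := fun r x => by rw [smul_eq_mul]; exact hψ r x }
  -- the socle is a semisimple module
  have hsocSS : IsSemisimpleModule R (ringSocle R) := by
    have h1 : IsSemisimpleModule R ↥(⨆ m ∈ {m : Submodule R R | IsAtom m}, m) := by
      apply isSemisimpleModule_biSup_of_isSemisimpleModule_submodule
      intro m hm
      haveI : IsSimpleModule R m := isSimpleModule_iff_isAtom.mpr hm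
      infer_instance
    have hEq : ringSocle R = ⨆ m ∈ {m : Submodule R R | IsAtom m}, m := sSup_eq_iSup
    exact IsSemisimpleModule.congr (LinearEquiv.ofEq _ _ hEq)
  haveI : IsSemisimpleRing S := (l.isSemisimpleModule_iff_of_bijective ψ.bijective).mp hsocSS
  -- basic facts about orbits
  have horbself : ∀ z : R, z ∈ leftOrbit z := fun z => ⟨1, (one_mul z).symm⟩
  have horbsoc : ∀ {z : R}, z ∈ ringSocle R → ∀ w ∈ leftOrbit z, w ∈ ringSocle R := by
    rintro z hz w ⟨r, rfl⟩
    exact (ringSocle R).smul_mem r hz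
  -- image of orbit under ψ
  have himg : ∀ (z : R) (hz : z ∈ ringSocle R),
      leftOrbit (ψ ⟨z, hz⟩) = ψ '' {m : ringSocle R | (m : R) ∈ leftOrbit z} := by
    intro z hz
    ext s
    constructor
    · rintro ⟨t, rfl⟩
      obtain ⟨r, rfl⟩ := hπ t
      refine ⟨r • ⟨z, hz⟩, ⟨r, ?_⟩, (hψ r ⟨z, hz⟩)⟩
      rfl
    · rintro ⟨m, hm, rfl⟩
      obtain ⟨r, hr⟩ := hm
      have hm' : m = r • (⟨z, hz⟩ : ringSocle R) := Subtype.ext (by simpa using hr)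
      rw [hm', hψ]
      exact ⟨π r, rfl⟩
  refine ⟨?_, ?_, ?_⟩
  · -- ω 0 = 0
    have h0 : (⟨(0 : R), (ringSocle R).zero_mem⟩ : ringSocle R) = 0 := rfl
    rw [hω 0, dif_pos (ringSocle R).zero_mem, h0, map_zero]
    exact hω'.1
  · -- constancy on orbits
    intro x y hxy
    by_cases hx : x ∈ ringSocle R
    · have hy : y ∈ ringSocle R := horbsoc hx y (hxy ▸ horbself y)
      rw [hω x, hω y, dif_pos hx, dif_pos hy]
      apply hω'.2.1
      rw [himg x hx, himg y hy, hxy]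
    · have hy : y ∉ ringSocle R := fun hy => hx (horbsoc hy x (hxy ▸ horbself x))
      rw [hω x, hω y, dif_neg hx, dif_neg hy]
  · -- sum over orbit
    intro x hx0
    classical
    set N : Submodule R R := Submodule.span R {x} with hN
    have hONset : leftOrbit x = (N : Set R) := leftOrbit_eq_span x
    have hNbot : N ≠ ⊥ := by
      intro h
      apply hx0
      have hxN : x ∈ N := Submodule.mem_span_singleton_self x
      rw [h] at hxN
      simpa using hxN
    haveI : IsAtomic (Submodule R R) :=
      isAtomic_of_orderBot_wellFounded_lt (wellFounded_lt)
    obtain ⟨a, ha, haN⟩ := (eq_bot_or_exists_atom_le N).resolve_left hNbot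
    set M : Submodule R R := N ⊓ ringSocle R with hM
    have hMbot : M ≠ ⊥ := by
      intro h
      have haM : a ≤ M := le_inf haN (le_sSup ha)
      rw [h] at haM
      exact ha.1 (le_bot_iff.mp haM)
    have hMsoc : M ≤ ringSocle R := inf_le_right
    set M' : Submodule R (ringSocle R) := M.comap (ringSocle R).subtype with hM'
    set I : Ideal S := Submodule.map l M' with hI
    have hIbot : I ≠ ⊥ := by
      obtain ⟨b, hbM, hb0⟩ := Submodule.exists_mem_ne_zero_of_ne_bot hMbot
      intro h
      have hbsoc : b ∈ ringSocle R := hMsoc hbM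
      have hbI : ψ ⟨b, hbsoc⟩ ∈ I := by
        refine Submodule.mem_map_of_mem ?_
        show ((⟨b, hbsoc⟩ : ringSocle R) : R) ∈ M
        exact hbM
      rw [h, Submodule.mem_bot] at hbI
      apply hb0
      have : (⟨b, hbsoc⟩ : ringSocle R) = 0 := ψ.injective (by rw [hbI, map_zero])
      exact congrArg Subtype.val this
    have hsumI := sum_weight_ideal ω' hω' I hIbot
    set F := (Set.toFinite (leftOrbit x)).toFinset with hF
    set G := (Set.toFinite ((I : Set S))).toFinset with hG
    have hmemF : ∀ y : R, y ∈ F ↔ y ∈ leftOrbit x := fun y => Set.Finite.mem_toFinset _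
    have hmem : ∀ y : R, (y ∈ F.filter (· ∈ ringSocle R)) ↔ y ∈ M := by
      intro y
      rw [Finset.mem_filter, hmemF, hM, Submodule.mem_inf, hONset]
      exact Iff.rfl
    have hmemG : ∀ s : S, s ∈ G ↔ s ∈ I := fun s => Set.Finite.mem_toFinset _
    -- the bijection data
    have hi : ∀ (y : R) (hy : y ∈ F.filter (· ∈ ringSocle R)),
        ψ ⟨y, hMsoc ((hmem y).mp hy)⟩ ∈ G := by
      intro y hy
      rw [hmemG]
      exact Submodule.mem_map_of_mem ((hmem y).mp hy)
    have hinj : ∀ (y₁ : R) (h₁ : y₁ ∈ F.filter (· ∈ ringSocle R))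
        (y₂ : R) (h₂ : y₂ ∈ F.filter (· ∈ ringSocle R)),
        ψ ⟨y₁, hMsoc ((hmem y₁).mp h₁)⟩ = ψ ⟨y₂, hMsoc ((hmem y₂).mp h₂)⟩ → y₁ = y₂ := by
      intro y₁ h₁ y₂ h₂ h
      have := ψ.injective h
      exact congrArg Subtype.val this
    have hsurj : ∀ s ∈ G, ∃ (y : R) (hy : y ∈ F.filter (· ∈ ringSocle R)),
        ψ ⟨y, hMsoc ((hmem y).mp hy)⟩ = s := by
      intro s hs
      rw [hmemG] at hs
      obtain ⟨m, hmM, hms⟩ := Submodule.mem_map.mp hs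
      refine ⟨(m : R), (hmem _).mpr (Submodule.mem_comap.mp hmM), ?_⟩
      rw [Subtype.coe_eta]
      exact hms
    have h1 : ∑ y ∈ F.filter (· ∈ ringSocle R), ω y = ∑ s ∈ G, ω' s := by
      refine Finset.sum_bij (fun y hy => ψ ⟨y, hMsoc ((hmem y).mp hy)⟩) hi hinj hsurj ?_
      intro y hy
      rw [hω y, dif_pos (hMsoc ((hmem y).mp hy))]
    have h2 : (F.filter (· ∈ ringSocle R)).card = G.card :=
      Finset.card_bij (fun y hy => ψ ⟨y, hMsoc ((hmem y).mp hy)⟩) hi hinj hsurj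
    have h3 : ∑ y ∈ F.filter (fun y => ¬ (y ∈ ringSocle R)), ω y
        = ((F.filter (fun y => ¬ (y ∈ ringSocle R))).card : ℝ) := by
      rw [Finset.sum_congr rfl (fun y hy => ?_), Finset.sum_const, nsmul_eq_mul, mul_one]
      rw [hω y, dif_neg (Finset.mem_filter.mp hy).2]
    calc ∑ y ∈ F, ω y
        = ∑ y ∈ F.filter (· ∈ ringSocle R), ω y
          + ∑ y ∈ F.filter (fun y => ¬ (y ∈ ringSocle R)), ω y :=
          (Finset.sum_filter_add_sum_filter_not F _ ω).symm
      _ = (G.card : ℝ) + ((F.filter (fun y => ¬ (y ∈ ringSocle R))).card : ℝ) := by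
          rw [h1, hsumI, h3]
      _ = ((F.filter (· ∈ ringSocle R)).card : ℝ)
          + ((F.filter (fun y => ¬ (y ∈ ringSocle R))).card : ℝ) := by rw [h2]
      _ = (F.card : ℝ) := by
          rw [← Nat.cast_add, Finset.card_filter_add_card_filter_not]
end

section
/- Let F be a finite field with q elements, let m be a positive integer, and let A be an m×m matrix over F of rank r. Then the principal left ideal RA = {B*A : B an m×m matrix over F} of the matrix ring has exactly q^(r·m) elements. -/
/-! Row `i` of `B * A` is `B i ᵥ* A`, so the matrices `B * A` are exactly those whose rows all
lie in the row space of `A`; that space has `q ^ rank A` elements, and there are `m` rows. -/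

namespace Matrix

variable {ι n k F : Type*}

theorem setOf_exists_mul_eq_eq_pi [Fintype n] [CommSemiring F] (A : Matrix n k F) :
    {X : Matrix ι k F | ∃ B : Matrix ι n F, X = B * A} =
      Set.univ.pi fun _ => (LinearMap.range A.vecMulLinear : Set (k → F)) := by
  ext X
  change (∃ B : Matrix ι n F, X = B * A) ↔ ∀ i ∈ Set.univ, X i ∈ LinearMap.range A.vecMulLinear
  simp only [Set.mem_univ, forall_const, LinearMap.mem_range, vecMulLinear_apply]
  constructor
  · rintro ⟨B, rfl⟩ i
    exact ⟨B i, (mul_apply_eq_vecMul B A i).symm⟩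
  · intro h
    choose B hB using h
    exact ⟨of B, funext fun i => (hB i).symm.trans (mul_apply_eq_vecMul (of B) A i).symm⟩

theorem natCard_range_vecMulLinear [Fintype n] [Fintype k] [Field F] [Fintype F]
    (A : Matrix n k F) :
    Nat.card (LinearMap.range A.vecMulLinear) = Nat.card F ^ A.rank := by
  rw [Module.natCard_eq_pow_finrank (K := F), range_vecMulLinear, rank_eq_finrank_span_row]

theorem natCard_setOf_exists_mul_eq [Fintype ι] [Fintype n] [Fintype k] [Field F] [Fintype F]
    (A : Matrix n k F) :
    Nat.card {X : Matrix ι k F | ∃ B : Matrix ι n F, X = B * A} =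
      Nat.card F ^ (A.rank * Fintype.card ι) := by
  rw [Nat.card_congr ((Equiv.setCongr (setOf_exists_mul_eq_eq_pi A)).trans (Equiv.Set.univPi _)),
    Nat.card_pi, Finset.prod_const, Finset.card_univ, SetLike.coe_sort_coe,
    natCard_range_vecMulLinear, pow_mul]

end Matrix

theorem card_principal_left_ideal_matrix_general
    {F : Type*} [Field F] [Fintype F] (q : ℕ) (hq : Fintype.card F = q)
    (m : ℕ) (A : Matrix (Fin m) (Fin m) F) (r : ℕ) (hr : A.rank = r) :
    Nat.card {X : Matrix (Fin m) (Fin m) F | ∃ B : Matrix (Fin m) (Fin m) F, X = B * A}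
      = q ^ (r * m) := by
  rw [Matrix.natCard_setOf_exists_mul_eq, Nat.card_eq_fintype_card, hq, hr, Fintype.card_fin]

theorem card_principal_left_ideal_matrix
    {F : Type*} [Field F] [Fintype F] (q : ℕ) (hq : Fintype.card F = q)
    (m : ℕ) (hm : 0 < m) (A : Matrix (Fin m) (Fin m) F) (r : ℕ) (hr : A.rank = r) :
    Nat.card {X : Matrix (Fin m) (Fin m) F | ∃ B : Matrix (Fin m) (Fin m) F, X = B * A}
      = q ^ (r * m) :=
  card_principal_left_ideal_matrix_general q hq m A r hr
end

section
/- Let F be a finite field with q elements and let m be a positive integer. Define ω : Matrix (Fin m) (Fin m) F → ℝ by ω(A) = 1 + (−1)^(r+1) · q^(r(r−1)/2) / ∏_{i=0}^{r−1} (q^m − q^i), where r = rank(A) (so that ω(0) = 0, the empty product being 1). Then ω is a normalized homogeneous weight on the matrix ring Matrix (Fin m) (Fin m) F. -/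
/-!
The left ideal generated by a matrix `x` consists of the matrices of `h ∘ x`, where `h` ranges
over all linear maps from the column space `U` of `x` to `Fᵐ`, and this parametrization is
bijective and preserves rank. So it suffices to show that `∑ (ω(f) - 1)` over all linear maps
`f : U → Fᵐ` vanishes when `0 < dim U ≤ m`. Exactly `∏_{i<c} (qᵐ - qⁱ)` of these maps have a
given kernel `K` of codimension `c`, which cancels the denominator of `ω`, and the sum becomes
`-∑_K (-1)^c q^(c(c-1)/2)`: the sum of the Möbius function `μ(K, U)` of the subspace lattice,
which is zero. That identity is the value at `X = 0` of the polynomial identity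
`∑_K ∏_{i<codim K} (X - qⁱ) = X^(dim U)`, which holds at `X = qⁿ` for every `n ≥ dim U`
because both sides count the linear maps `U → Fⁿ`.
-/

open Module Finset LinearMap

noncomputable def weightDeviation (q n r : ℕ) : ℝ :=
  (-1 : ℝ) ^ (r + 1) * (q : ℝ) ^ (r * (r - 1) / 2) / ∏ i ∈ range r, ((q : ℝ) ^ n - (q : ℝ) ^ i)

theorem prod_pow_sub_pow_mul_weightDeviation {q n r : ℕ} (hq : 1 < q) (hr : r ≤ n) :
    (∏ i ∈ range r, ((q : ℝ) ^ n - (q : ℝ) ^ i)) * weightDeviation q n r =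
      -((-1 : ℝ) ^ r * (q : ℝ) ^ (r * (r - 1) / 2)) := by
  have hne : ∏ i ∈ range r, ((q : ℝ) ^ n - (q : ℝ) ^ i) ≠ 0 :=
    prod_ne_zero_iff.2 fun i hi => sub_ne_zero.2 <| ne_of_gt <|
      pow_lt_pow_right₀ (by exact_mod_cast hq) ((mem_range.1 hi).trans_le hr)
  rw [weightDeviation, mul_div_cancel₀ _ hne, pow_succ]
  ring

instance {R M N : Type*} [Semiring R] [AddCommMonoid M] [Module R M] [AddCommMonoid N]
    [Module R N] [Finite M] [Finite N] : Finite (M →ₗ[R] N) :=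
  Finite.of_injective _ DFunLike.coe_injective

section FiniteField

variable {F : Type*} [Field F] {U W : Type*} [AddCommGroup U] [Module F U]
  [AddCommGroup W] [Module F W]

theorem card_linearMap_ker_eq (K : Submodule F U) :
    Nat.card {f : U →ₗ[F] W // ker f = K} =
      Nat.card {g : (U ⧸ K) →ₗ[F] W // Function.Injective g} :=
  Nat.card_congr
    { toFun f := ⟨K.liftQ f.1 f.2.ge, ker_eq_bot.1 (K.ker_liftQ_eq_bot' f.1 f.2.symm)⟩
      invFun g := ⟨g.1 ∘ₗ K.mkQ, by rw [ker_comp, ker_eq_bot.2 g.2, Submodule.comap_bot, K.ker_mkQ]⟩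
      left_inv f := Subtype.ext (K.liftQ_mkQ f.1 f.2.ge)
      right_inv g := Subtype.ext (K.linearMap_qext (K.liftQ_mkQ _ _)) }

variable [Fintype F]

local notation "q" => Fintype.card F

attribute [local instance] Fintype.ofFinite

theorem card_injective_linearMap [FiniteDimensional F U] [Finite W]
    (h : finrank F U ≤ finrank F W) :
    Nat.card {f : U →ₗ[F] W // Function.Injective f} =
      ∏ i ∈ range (finrank F U), (q ^ finrank F W - q ^ i) := by
  let b := finBasis F U
  have e : {s : Fin (finrank F U) → W // LinearIndependent F s} ≃
      {f : U →ₗ[F] W // Function.Injective f} :=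
    (b.constr F).toEquiv.subtypeEquiv fun s =>
      ⟨b.injective_constr_of_linearIndependent (R₂ := F), fun hf => by
        simpa [Function.comp_def] using b.linearIndependent.map' _ (ker_eq_bot.2 hf)⟩
  rw [← Nat.card_congr e, card_linearIndependent h,
    Fin.prod_univ_eq_prod_range (fun i => q ^ finrank F W - q ^ i)]

theorem natCast_card_linearMap_ker_eq [Finite U] [Finite W] (K : Submodule F U)
    (h : finrank F U ≤ finrank F W) :
    (Nat.card {f : U →ₗ[F] W // ker f = K} : ℝ) =
      ∏ i ∈ range (finrank F (U ⧸ K)), ((q : ℝ) ^ finrank F W - (q : ℝ) ^ i) := by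
  have := Module.Finite.of_finite (R := F) (M := U)
  rw [card_linearMap_ker_eq, card_injective_linearMap ((K.finrank_quotient_le).trans h),
    Nat.cast_prod]
  refine prod_congr rfl fun i hi => ?_
  rw [Nat.cast_sub (Nat.pow_le_pow_right Fintype.card_pos ?_), Nat.cast_pow, Nat.cast_pow]
  exact (mem_range.1 hi).le.trans ((K.finrank_quotient_le).trans h)

theorem sum_prod_pow_sub_pow_finrank_quotient [Finite U] [Finite W]
    (h : finrank F U ≤ finrank F W) :
    ∑ K : Submodule F U, ∏ i ∈ range (finrank F (U ⧸ K)), ((q : ℝ) ^ finrank F W - (q : ℝ) ^ i) =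
      (q : ℝ) ^ (finrank F U * finrank F W) := by
  classical
  have := Module.Finite.of_finite (R := F) (M := U)
  have := Module.Finite.of_finite (R := F) (M := W)
  rw [sum_congr rfl fun K _ => (natCast_card_linearMap_ker_eq K h).symm]
  simp only [Nat.card_eq_fintype_card]
  rw [← Nat.cast_sum, ← Fintype.card_sigma, Fintype.card_congr (Equiv.sigmaFiberEquiv _),
    Module.card_eq_pow_finrank (K := F), finrank_linearMap, Nat.cast_pow]

open Polynomial in
theorem sum_prod_X_sub_C_finrank_quotient [Finite U] :
    ∑ K : Submodule F U, ∏ i ∈ range (finrank F (U ⧸ K)), (X - C ((q : ℝ) ^ i)) =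
      X ^ finrank F U := by
  apply eq_of_infinite_eval_eq
  refine Set.infinite_of_injective_forall_mem (f := fun n : ℕ => (q : ℝ) ^ (n + finrank F U)) ?_ ?_
  · exact (pow_right_injective₀ (by positivity) (by exact_mod_cast Fintype.one_lt_card.ne')).comp
      (add_left_injective _)
  · intro n
    have := sum_prod_pow_sub_pow_finrank_quotient (F := F) (U := U)
      (W := Fin (n + finrank F U) → F) (by simp)
    simp only [finrank_fin_fun] at this
    simp [eval_finsetSum, eval_prod, this, ← pow_mul, mul_comm]

open Polynomial in
theorem sum_neg_one_pow_mul_pow_finrank_quotient_eq_zero [Finite U] [Nontrivial U] :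
    ∑ K : Submodule F U, (-1 : ℝ) ^ finrank F (U ⧸ K) *
      (q : ℝ) ^ (finrank F (U ⧸ K) * (finrank F (U ⧸ K) - 1) / 2) = 0 := by
  have := Module.Finite.of_finite (R := F) (M := U)
  have h := congrArg (eval 0) (sum_prod_X_sub_C_finrank_quotient (F := F) (U := U))
  simp only [eval_finsetSum, eval_prod, eval_sub, eval_X, eval_C, zero_sub, prod_neg, card_range,
    eval_pow, zero_pow finrank_pos.ne'] at h
  simpa only [prod_pow_eq_pow_sum (range _) (fun i => i), sum_range_id] using h

theorem sum_weightDeviation_finrank_range_eq_zero [Finite U] [Nontrivial U] [Finite W]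
    (h : finrank F U ≤ finrank F W) :
    ∑ f : U →ₗ[F] W, weightDeviation q (finrank F W) (finrank F (range f)) = 0 := by
  classical
  have := Module.Finite.of_finite (R := F) (M := U)
  calc ∑ f : U →ₗ[F] W, weightDeviation q (finrank F W) (finrank F (range f))
      = ∑ K : Submodule F U, (Nat.card {f : U →ₗ[F] W // ker f = K} : ℝ) *
          weightDeviation q (finrank F W) (finrank F (U ⧸ K)) := by
        rw [← Fintype.sum_fiberwise ker]
        refine sum_congr rfl fun K _ => ?_
        rw [Nat.card_eq_fintype_card, ← nsmul_eq_mul,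
          ← card_univ (α := {f : U →ₗ[F] W // ker f = K}), ← sum_const]
        refine sum_congr rfl fun f _ => ?_
        rw [← f.1.quotKerEquivRange.finrank_eq, f.2]
    _ = ∑ K : Submodule F U, -((-1 : ℝ) ^ finrank F (U ⧸ K) *
          (q : ℝ) ^ (finrank F (U ⧸ K) * (finrank F (U ⧸ K) - 1) / 2)) := by
        refine sum_congr rfl fun K _ => ?_
        rw [natCast_card_linearMap_ker_eq K h, prod_pow_sub_pow_mul_weightDeviation
          Fintype.one_lt_card ((K.finrank_quotient_le).trans h)]
    _ = 0 := by rw [sum_neg_distrib, sum_neg_one_pow_mul_pow_finrank_quotient_eq_zero, neg_zero]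

end FiniteField

theorem self_mem_leftOrbit {R : Type*} [Ring R] (x : R) : x ∈ leftOrbit x :=
  ⟨1, (one_mul x).symm⟩

namespace Matrix

theorem rank_eq_of_leftOrbit_eq {n R : Type*} [Fintype n] [DecidableEq n] [CommRing R]
    [StrongRankCondition R] {x y : Matrix n n R} (h : leftOrbit x = leftOrbit y) :
    x.rank = y.rank := by
  obtain ⟨M, hM⟩ : x ∈ leftOrbit y := h ▸ self_mem_leftOrbit x
  obtain ⟨N, hN⟩ : y ∈ leftOrbit x := h ▸ self_mem_leftOrbit y
  exact le_antisymm (hM ▸ rank_mul_le_right M y) (hN ▸ rank_mul_le_right N x)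

variable {F : Type*} [Field F] {n : Type*} [Fintype n] [DecidableEq n]

theorem rank_eq_finrank_range_toLin' (A : Matrix n n F) :
    A.rank = finrank F (range (toLin' A)) := by
  rw [toLin'_apply']
  rfl

theorem leftOrbit_eq_range_toMatrix'_comp_rangeRestrict (x : Matrix n n F) :
    leftOrbit x = Set.range fun h : range (toLin' x) →ₗ[F] (n → F) =>
      LinearMap.toMatrix' (h ∘ₗ (toLin' x).rangeRestrict) := by
  have hx : (range (toLin' x)).subtype ∘ₗ (toLin' x).rangeRestrict = toLin' x := rfl
  ext y
  constructor
  · rintro ⟨M, rfl⟩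
    refine ⟨toLin' M ∘ₗ (range (toLin' x)).subtype, toLin'.injective ?_⟩
    rw [toLin'_toMatrix', comp_assoc, hx, toLin'_mul]
  · rintro ⟨h, rfl⟩
    obtain ⟨g, hg⟩ := exists_extend h
    refine ⟨LinearMap.toMatrix' g, toLin'.injective ?_⟩
    rw [toLin'_toMatrix', toLin'_mul, toLin'_toMatrix', ← hg, comp_assoc, hx]

attribute [local instance] Fintype.ofFinite in
theorem sum_leftOrbit_rank [Finite F] {M : Type*} [AddCommMonoid M] (x : Matrix n n F)
    (g : ℕ → M) :
    ∑ y ∈ (Set.toFinite (leftOrbit x)).toFinset, g y.rank =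
      ∑ h : range (toLin' x) →ₗ[F] (n → F), g (finrank F (range h)) := by
  have hT := leftOrbit_eq_range_toMatrix'_comp_rangeRestrict x
  refine (sum_nbij (fun h => LinearMap.toMatrix' (h ∘ₗ (toLin' x).rangeRestrict))
    (fun h _ => by simp [hT]) ?_ (fun y hy => by simpa [hT] using hy) fun h _ => ?_).symm
  · exact fun h _ h' _ hh =>
      (cancel_right (toLin' x).surjective_rangeRestrict).1 (LinearMap.toMatrix'.injective hh)
  · rw [rank_eq_finrank_range_toLin', toLin'_toMatrix',
      range_comp_of_range_eq_top _ (range_rangeRestrict _)]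

end Matrix

theorem homogeneous_weight_matrix_ring_general
    {F : Type*} [Field F] [Fintype F] (q : ℕ) (hq : Fintype.card F = q)
    (m : ℕ)
    (ω : Matrix (Fin m) (Fin m) F → ℝ)
    (hω : ∀ A : Matrix (Fin m) (Fin m) F,
      ω A = 1 + (-1 : ℝ) ^ (A.rank + 1) * (q : ℝ) ^ (A.rank * (A.rank - 1) / 2)
              / ∏ i ∈ Finset.range A.rank, ((q : ℝ) ^ m - (q : ℝ) ^ i)) :
    IsNormHomWeight ω := by
  subst hq
  have hω' : ∀ A, ω A = 1 + weightDeviation (Fintype.card F) m A.rank := hω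
  refine ⟨by simp [hω', weightDeviation], fun x y hxy => by
    rw [hω', hω', Matrix.rank_eq_of_leftOrbit_eq hxy], fun x hx => ?_⟩
  have : Nontrivial (range (Matrix.toLin' x)) :=
    Submodule.nontrivial_iff_ne_bot.2 (by simpa [range_eq_bot] using hx)
  have hdev := sum_weightDeviation_finrank_range_eq_zero (U := range (Matrix.toLin' x))
    (W := Fin m → F) (Submodule.finrank_le _)
  rw [finrank_fin_fun] at hdev
  rw [sum_congr rfl fun y _ => hω' y, sum_add_distrib, sum_const, nsmul_one,
    Matrix.sum_leftOrbit_rank x, hdev, add_zero]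

theorem homogeneous_weight_matrix_ring
    {F : Type*} [Field F] [Fintype F] (q : ℕ) (hq : Fintype.card F = q)
    (m : ℕ) (hm : 0 < m)
    (ω : Matrix (Fin m) (Fin m) F → ℝ)
    (hω : ∀ A : Matrix (Fin m) (Fin m) F,
      ω A = 1 + (-1 : ℝ) ^ (A.rank + 1) * (q : ℝ) ^ (A.rank * (A.rank - 1) / 2)
              / ∏ i ∈ Finset.range A.rank, ((q : ℝ) ^ m - (q : ℝ) ^ i)) :
    IsNormHomWeight ω :=
  homogeneous_weight_matrix_ring_general q hq m ω hω
end

section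
/- Let R be a finite ring with Jacobson radical J and socle soc(R) (as a left R-module). Suppose there are given: a left R-module isomorphism ψ : soc(R) → R/J (R/J regarded as a left R-module via the quotient map), and a ring isomorphism ϕ : R/J → ∏_{i=1}^{t} Matrix (Fin m_i) (Fin m_i) F_i, where each F_i is a finite field with q_i elements and each m_i is a positive integer. Define ω : R → ℝ by: for x ∈ soc(R), ω(x) = 1 − ∏_{i=1}^{t} ( (−1)^(r_i) · q_i^(r_i(r_i−1)/2) / ∏_{l=0}^{r_i−1} (q_i^(m_i) − q_i^l) ), where r_i is the rank of the i-th component of ϕ(ψ(x)); and ω(x) = 1 for x ∉ soc(R). Then ω is a normalized homogeneous weight on R. Moreover, ω(x) ≠ 1 for every x ∈ soc(R), so that {x ∈ R : ω(x) = 1} = R ∖ soc(R). -/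
/-!
On the socle, `ω = 1 - Γ ∘ ϕ ∘ ψ` with `Γ w = ∏ᵢ f_{qᵢ,mᵢ}(rank wᵢ)`, where
`f_{q,m}(r) = (-1)^r q^(r(r-1)/2) / ∏_{l<r} (q^m - q^l)` satisfies the recurrence
`q^r f(r) + (q^m - q^r) f(r+1) = 0` for `r < m`. The averaging condition at `x ≠ 0` thus
amounts to `∑_{y ∈ Rx ∩ soc R} Γ(ϕ(ψ y)) = 0`. Since every nonzero left ideal contains a minimal
one, `Rx ∩ soc R ≠ 0`, and its image under `ϕ ∘ ψ` is a nonzero left ideal of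
`∏ᵢ M_{mᵢ}(Fᵢ)`. Such an ideal is the product of its components, so the sum factors and it is
enough that the sum over one nonzero component vanishes. A left ideal of `M_m(F_q)` is the set of
matrices whose kernel contains the common kernel `U`, i.e. it is the space of linear maps
`F_q^m / U → F_q^m`, which is parametrised by `d`-tuples of vectors (`d ≥ 1` as the ideal is
nonzero). Fixing all but the first vector, whose span has dimension `r < m`, the span of the
tuple has dimension `r` for `q^r` choices of the first vector and `r + 1` for the
`q^m - q^r` others, and the recurrence makes the sum vanish.
-/

open Module Submodule LinearMap

noncomputable def rankCoeff (q m r : ℕ) : ℝ :=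
  (-1 : ℝ) ^ r * (q : ℝ) ^ (r * (r - 1) / 2) / ∏ l ∈ Finset.range r, ((q : ℝ) ^ m - (q : ℝ) ^ l)

section rankCoeff

variable {q m : ℕ}

@[simp]
lemma rankCoeff_zero (q m : ℕ) : rankCoeff q m 0 = 1 := by simp [rankCoeff]

lemma pow_sub_pow_ne_zero (hq : 1 < q) {l : ℕ} (hl : l < m) : (q : ℝ) ^ m - (q : ℝ) ^ l ≠ 0 :=
  sub_ne_zero.mpr (pow_lt_pow_right₀ (by exact_mod_cast hq) hl).ne'

lemma rankCoeff_ne_zero (hq : 1 < q) {r : ℕ} (hr : r ≤ m) : rankCoeff q m r ≠ 0 := by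
  have : (q : ℝ) ≠ 0 := by positivity
  refine div_ne_zero (by simp [this]) (Finset.prod_ne_zero_iff.mpr fun l hl => ?_)
  exact pow_sub_pow_ne_zero hq ((Finset.mem_range.mp hl).trans_le hr)

lemma pow_mul_rankCoeff_add_mul_rankCoeff_succ (hq : 1 < q) {r : ℕ} (hr : r < m) :
    (q : ℝ) ^ r * rankCoeff q m r + ((q : ℝ) ^ m - (q : ℝ) ^ r) * rankCoeff q m (r + 1) = 0 := by
  have hD := Finset.prod_ne_zero_iff.mpr fun l hl =>
    pow_sub_pow_ne_zero hq ((Finset.mem_range.mp hl).trans hr)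
  have hd := pow_sub_pow_ne_zero hq hr
  rw [rankCoeff, rankCoeff, Nat.triangle_succ, Finset.prod_range_succ, pow_succ, pow_add]
  field_simp
  ring

end rankCoeff

lemma finrank_span_singleton_sup_of_notMem {K V : Type*} [Field K] [AddCommGroup V] [Module K V]
    {x : V} {U : Submodule K V} [FiniteDimensional K U]
    (hx : x ∉ U) : finrank K ↥(K ∙ x ⊔ U) = finrank K U + 1 := by
  have hx0 : x ≠ 0 := fun h => hx (h ▸ U.zero_mem)
  have := finrank_sup_add_finrank_inf_eq (K ∙ x) U
  rw [((disjoint_span_singleton' hx0).mpr hx).symm.eq_bot, finrank_bot,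
    finrank_span_singleton hx0] at this
  omega

section finiteField

variable {K V : Type*} [Field K] [Fintype K] [AddCommGroup V] [Module K V] [Fintype V]

lemma sum_rankCoeff_finrank_span_singleton_sup (U : Submodule K V)
    (hU : finrank K U < finrank K V) :
    ∑ x : V, rankCoeff (Fintype.card K) (finrank K V) (finrank K ↥(K ∙ x ⊔ U)) = 0 := by
  classical
  set q := Fintype.card K
  set r := finrank K U
  have hq : 1 < q := Fintype.one_lt_card
  have hsummand : ∀ x : V, rankCoeff q (finrank K V) (finrank K ↥(K ∙ x ⊔ U)) =
      rankCoeff q (finrank K V) (r + 1) +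
        if x ∈ U then rankCoeff q (finrank K V) r - rankCoeff q (finrank K V) (r + 1) else 0 := by
    intro x
    split_ifs with hx
    · rw [sup_eq_right.mpr ((span_singleton_le_iff_mem x U).mpr hx)]; ring
    · rw [finrank_span_singleton_sup_of_notMem hx, add_zero]
  simp only [hsummand, Finset.sum_add_distrib, Finset.sum_ite, Finset.sum_const_zero]
  rw [Finset.sum_const, Finset.sum_const, Finset.card_univ, ← Fintype.card_subtype,
    card_eq_pow_finrank (K := K) (V := V), card_eq_pow_finrank (K := K) (V := U)]
  push_cast [nsmul_eq_mul]
  linear_combination pow_mul_rankCoeff_add_mul_rankCoeff_succ hq hU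

open Set in
lemma sum_rankCoeff_finrank_span_range {d : ℕ} (hd0 : 0 < d) (hd : d ≤ finrank K V) :
    ∑ v : Fin d → V,
      rankCoeff (Fintype.card K) (finrank K V) (finrank K (span K (range v))) = 0 := by
  obtain ⟨d, rfl⟩ := Nat.exists_eq_succ_of_ne_zero hd0.ne'
  rw [← (Fin.consEquiv fun _ => V).sum_comp, Fintype.sum_prod_type, Finset.sum_comm]
  refine Finset.sum_eq_zero fun v _ => ?_
  have hspan : ∀ x, span K (range ((Fin.consEquiv fun _ => V) (x, v))) = K ∙ x ⊔ span K (range v) :=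
    fun x => by rw [← span_insert, ← Fin.range_cons]; rfl
  rw [Finset.sum_congr rfl fun x _ => by rw [hspan x]]
  exact sum_rankCoeff_finrank_span_singleton_sup _
    ((finrank_range_le_card v).trans_lt (by simpa using hd))

end finiteField

lemma LinearMap.exists_comp_eq_of_ker_le {K V W X : Type*} [DivisionRing K] [AddCommGroup V]
    [Module K V] [AddCommGroup W] [Module K W] [AddCommGroup X] [Module K X]
    (f : V →ₗ[K] W) (g : V →ₗ[K] X) (h : ker g ≤ ker f) : ∃ D : X →ₗ[K] W, D ∘ₗ g = f := by
  obtain ⟨D, hD⟩ :=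
    LinearMap.exists_extend ((ker g).liftQ f h ∘ₗ g.quotKerEquivRange.symm.toLinearMap)
  refine ⟨D, LinearMap.ext fun x => ?_⟩
  have := LinearMap.congr_fun hD ⟨g x, mem_range_self g x⟩
  simpa [quotKerEquivRange_symm_apply_image] using this

namespace Matrix

variable {K n : Type*} [Field K] [Fintype n] [DecidableEq n]

lemma mem_of_iInf_ker_toLin'_le [Finite K] {L : Submodule (Matrix n n K) (Matrix n n K)}
    {B : Matrix n n K} (hB : ⨅ A : L, ker (toLin' (A : Matrix n n K)) ≤ ker (toLin' B)) :
    B ∈ L := by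
  classical
  have := Fintype.ofFinite L
  -- factoring `B` through `x ↦ (A x)_{A ∈ L}` writes it as a left combination `∑ D_A * A`
  obtain ⟨D, hD⟩ := LinearMap.exists_comp_eq_of_ker_le (toLin' B)
    (LinearMap.pi fun A : L => toLin' (A : Matrix n n K)) (by rwa [ker_pi])
  have hB :
      B = ∑ A : L, LinearMap.toMatrix' (D ∘ₗ LinearMap.single K (fun _ : L => n → K) A) * A.1 := by
    apply toLin'.injective
    refine LinearMap.ext fun x => ?_
    rw [map_sum, ← hD, LinearMap.sum_apply]
    simp only [toLin'_mul, toLin'_toMatrix', LinearMap.comp_apply, ← map_sum]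
    exact congrArg D (Finset.univ_sum_single _).symm
  rw [hB]
  exact sum_mem fun A _ => L.smul_mem _ A.2

lemma sum_rankCoeff_rank_eq_zero [Fintype K] {L : Submodule (Matrix n n K) (Matrix n n K)}
    [Fintype L] (hL : L ≠ ⊥) :
    ∑ A : L, rankCoeff (Fintype.card K) (Fintype.card n) (A : Matrix n n K).rank = 0 := by
  set U := ⨅ A : L, ker (toLin' (A : Matrix n n K))
  set d := finrank K ((n → K) ⧸ U)
  let b := Module.finBasis K ((n → K) ⧸ U)
  have hU : U ≠ ⊤ := by
    intro hU
    obtain ⟨A, hA, hA0⟩ := (Submodule.ne_bot_iff L).mp hL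
    refine hA0 (toLin'.injective (LinearMap.ext fun x => ?_))
    have : x ∈ U := hU ▸ Submodule.mem_top
    simpa using (Submodule.mem_iInf _).mp this ⟨A, hA⟩
  have hd0 : 0 < d := by
    have := Submodule.Quotient.nontrivial_iff.mpr hU
    exact Module.finrank_pos
  have hd : d ≤ finrank K (n → K) := U.finrank_quotient_le
  let Φ : (Fin d → n → K) → L := fun v =>
    ⟨LinearMap.toMatrix' (b.constr K v ∘ₗ U.mkQ), mem_of_iInf_ker_toLin'_le fun x hx => by
      simp [(Submodule.Quotient.mk_eq_zero U).mpr hx]⟩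
  have hΦ : Function.Bijective Φ := by
    refine ⟨fun v w h => ?_, fun A => ?_⟩
    · have h' := congrArg (fun A : L => toLin' (A : Matrix n n K)) h
      simp only [Φ, toLin'_toMatrix'] at h'
      exact (b.constr K).injective ((LinearMap.cancel_right U.mkQ_surjective).mp h')
    · refine ⟨(b.constr K).symm (U.liftQ (toLin' (A : Matrix n n K)) (iInf_le _ A)), ?_⟩
      ext1
      simp [Φ]
  have hrank : ∀ v, (Φ v : Matrix n n K).rank = finrank K (span K (Set.range v)) := by
    intro v
    rw [rank, ← toLin'_apply', toLin'_toMatrix', range_comp_of_range_eq_top _ U.range_mkQ,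
      b.constr_range]
  rw [← Fintype.sum_bijective Φ hΦ (fun v => rankCoeff _ _ (finrank K (span K (Set.range v)))) _
    fun v => by rw [hrank]]
  simpa using sum_rankCoeff_finrank_span_range hd0 hd

end Matrix

namespace Submodule

variable {ι : Type*} [DecidableEq ι] {A : ι → Type*} [∀ i, Ring (A i)]

def piComponent (T : Submodule (∀ i, A i) (∀ i, A i)) (i : ι) : Submodule (A i) (A i) where
  carrier := {a | Pi.single i a ∈ T}
  add_mem' {a b} ha hb := by simpa only [Set.mem_ofPred_eq, Pi.single_add] using T.add_mem ha hb
  zero_mem' := by simp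
  smul_mem' c a ha := by
    simpa only [Set.mem_ofPred_eq, smul_eq_mul, Pi.single_mul] using T.smul_mem (Pi.single i c) ha

variable [Fintype ι] {T : Submodule (∀ i, A i) (∀ i, A i)}

lemma mem_iff_forall_mem_piComponent {w : ∀ i, A i} : w ∈ T ↔ ∀ i, w i ∈ T.piComponent i := by
  refine ⟨fun hw i => ?_, fun hw => ?_⟩
  · change Pi.single i (w i) ∈ T
    simpa only [smul_eq_mul, ← Pi.single_mul_left, one_mul] using T.smul_mem (Pi.single i 1) hw
  · rw [← Finset.univ_sum_single w]
    exact sum_mem fun i _ => hw i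

lemma exists_piComponent_ne_bot (hT : T ≠ ⊥) : ∃ i, T.piComponent i ≠ ⊥ := by
  obtain ⟨w, hw, hw0⟩ := (Submodule.ne_bot_iff T).mp hT
  obtain ⟨i, hi⟩ := Function.ne_iff.mp hw0
  exact ⟨i, (Submodule.ne_bot_iff _).mpr ⟨w i, mem_iff_forall_mem_piComponent.mp hw i, hi⟩⟩

lemma sum_prod_eq_prod_sum_piComponent {M : Type*} [CommSemiring M] [Fintype T]
    [∀ i, Fintype (T.piComponent i)] (g : ∀ i, A i → M) :
    ∑ w : T, ∏ i, g i ((w : ∀ i, A i) i) = ∏ i, ∑ a : T.piComponent i, g i a := by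
  rw [Fintype.prod_sum]
  exact Fintype.sum_equiv ((Equiv.subtypeEquivRight fun _ => mem_iff_forall_mem_piComponent).trans
    Equiv.subtypePiEquivPi) _ _ fun _ => rfl

end Submodule

section leftOrbit

variable {R : Type*} [Ring R]

lemma mem_leftOrbit_self (x : R) : x ∈ leftOrbit x := ⟨1, (one_mul x).symm⟩

lemma leftOrbit_eq_span_singleton (x : R) : leftOrbit x = (R ∙ x : Set R) := by
  ext z
  simp only [leftOrbit, Set.mem_ofPred_eq, SetLike.mem_coe, Submodule.mem_span_singleton,
    smul_eq_mul, eq_comm]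

lemma leftOrbit_eq_iff {x y : R} :
    leftOrbit x = leftOrbit y ↔ (∃ a, x = a * y) ∧ ∃ b, y = b * x := by
  refine ⟨fun h => ⟨(h ▸ mem_leftOrbit_self x : x ∈ leftOrbit y),
    (h ▸ mem_leftOrbit_self y : y ∈ leftOrbit x)⟩, ?_⟩
  rintro ⟨⟨a, rfl⟩, b, hb⟩
  ext z
  refine ⟨fun ⟨c, hc⟩ => ⟨c * a, by rw [hc, mul_assoc]⟩, fun ⟨c, hc⟩ => ⟨c * b, ?_⟩⟩
  rw [hc, mul_assoc, ← hb]

end leftOrbit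

section piRankCoeff

variable {ι : Type*} [Fintype ι] {K : ι → Type*} [∀ i, Field (K i)] [∀ i, Fintype (K i)]
  {n : ι → Type*} [∀ i, Fintype (n i)]

noncomputable def piRankCoeff (w : ∀ i, Matrix (n i) (n i) (K i)) : ℝ :=
  ∏ i, rankCoeff (Fintype.card (K i)) (Fintype.card (n i)) (w i).rank

lemma piRankCoeff_zero : piRankCoeff (0 : ∀ i, Matrix (n i) (n i) (K i)) = 1 := by
  simp [piRankCoeff]

lemma piRankCoeff_ne_zero (w : ∀ i, Matrix (n i) (n i) (K i)) : piRankCoeff w ≠ 0 :=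
  Finset.prod_ne_zero_iff.mpr fun _ _ =>
    rankCoeff_ne_zero Fintype.one_lt_card (Matrix.rank_le_card_width _)

lemma piRankCoeff_eq_of_leftOrbit_eq [∀ i, DecidableEq (n i)] {v w : ∀ i, Matrix (n i) (n i) (K i)}
    (h : leftOrbit v = leftOrbit w) : piRankCoeff v = piRankCoeff w := by
  obtain ⟨⟨a, rfl⟩, b, hb⟩ := leftOrbit_eq_iff.mp h
  refine Finset.prod_congr rfl fun i _ => congrArg _ (le_antisymm (Matrix.rank_mul_le_right _ _) ?_)
  conv_lhs => rw [hb]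
  exact Matrix.rank_mul_le_right _ _

lemma sum_piRankCoeff_eq_zero [∀ i, DecidableEq (n i)]
    (T : Submodule (∀ i, Matrix (n i) (n i) (K i)) (∀ i, Matrix (n i) (n i) (K i))) [Fintype T]
    (hT : T ≠ ⊥) : ∑ w : T, piRankCoeff (w : ∀ i, Matrix (n i) (n i) (K i)) = 0 := by
  classical
  obtain ⟨i, hi⟩ := T.exists_piComponent_ne_bot hT
  have := fun i => Fintype.ofFinite (T.piComponent i)
  simp only [piRankCoeff]
  rw [Submodule.sum_prod_eq_prod_sum_piComponent fun i (A : Matrix (n i) (n i) (K i)) =>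
    rankCoeff (Fintype.card (K i)) (Fintype.card (n i)) A.rank]
  exact Finset.prod_eq_zero (Finset.mem_univ i) (Matrix.sum_rankCoeff_rank_eq_zero hi)

end piRankCoeff

lemma inf_ringSocle_ne_bot {R : Type*} [Ring R] [IsAtomic (Submodule R R)] {N : Submodule R R}
    (hN : N ≠ ⊥) : N ⊓ ringSocle R ≠ ⊥ := by
  obtain ⟨a, ha, haN⟩ := (eq_bot_or_exists_atom_le N).resolve_left hN
  exact ne_bot_of_le_ne_bot ha.1 (le_inf haN (le_sSup ha))

lemma isNormHomWeight_one_sub {R : Type*} [Ring R] [Finite R] {c : R → ℝ} (h0 : c 0 = 1)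
    (hinv : ∀ x y, leftOrbit x = leftOrbit y → c x = c y)
    (hsum : ∀ x ≠ 0, ∑ y ∈ (Set.toFinite (leftOrbit x)).toFinset, c y = 0) :
    IsNormHomWeight fun x => 1 - c x :=
  ⟨by simp only [h0, sub_self], fun x y h => by simp only [hinv x y h],
    fun x hx => by
      simp only [Finset.sum_sub_distrib, hsum x hx, Finset.sum_const, nsmul_one, sub_zero]⟩

lemma mem_iff_of_leftOrbit_eq {R : Type*} [Ring R] (M : Submodule R R) {x y : R}
    (h : leftOrbit x = leftOrbit y) : x ∈ M ↔ y ∈ M := by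
  obtain ⟨⟨a, rfl⟩, b, hb⟩ := leftOrbit_eq_iff.mp h
  exact ⟨fun hx => hb ▸ M.smul_mem b hx, M.smul_mem a⟩

section semilinear

variable {R P : Type*} [Ring R] [Ring P] {M : Submodule R R} {σ : R →+* P}

lemma leftOrbit_eq_of_leftOrbit_coe_eq (θ : M →ₛₗ[σ] P) {x y : M}
    (h : leftOrbit (x : R) = leftOrbit (y : R)) : leftOrbit (θ x) = leftOrbit (θ y) := by
  obtain ⟨⟨a, hx⟩, b, hy⟩ := leftOrbit_eq_iff.mp h
  refine leftOrbit_eq_iff.mpr ⟨⟨σ a, ?_⟩, σ b, ?_⟩ <;> rw [← smul_eq_mul, ← θ.map_smulₛₗ]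
  exacts [congrArg θ (Subtype.ext hx), congrArg θ (Subtype.ext hy)]

variable [RingHomSurjective σ] [Finite R]

open Classical in
lemma sum_leftOrbit_dite_eq_sum_map (θ : M →ₛₗ[σ] P) (hθ : Function.Injective θ) (Γ : P → ℝ)
    (x : R) [Fintype (((R ∙ x).comap M.subtype).map θ)] :
    ∑ y ∈ (Set.toFinite (leftOrbit x)).toFinset, (if h : y ∈ M then Γ (θ ⟨y, h⟩) else 0) =
      ∑ w : ((R ∙ x).comap M.subtype).map θ, Γ w := by
  have := Fintype.ofFinite (R ∙ x)
  have := Fintype.ofFinite ((R ∙ x).comap M.subtype)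
  calc ∑ y ∈ (Set.toFinite (leftOrbit x)).toFinset, (if h : y ∈ M then Γ (θ ⟨y, h⟩) else 0)
      = ∑ y : R ∙ x, if h : (y : R) ∈ M then Γ (θ ⟨y, h⟩) else 0 :=
        Finset.sum_subtype _ (by simp [leftOrbit_eq_span_singleton]) _
    _ = ∑ z : (R ∙ x).comap M.subtype, Γ (θ z) := by
        refine (Fintype.sum_of_injective
          (fun z : (R ∙ x).comap M.subtype => (⟨z.1, z.2⟩ : R ∙ x))
          (fun z z' h => Subtype.ext (Subtype.ext (congrArg (fun y : R ∙ x => (y : R)) h))) _ _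
          (fun y hy => dif_neg fun hyM => hy ⟨⟨⟨y, hyM⟩, y.2⟩, rfl⟩) fun z => ?_).symm
        simp only [Subtype.coe_eta, SetLike.coe_mem, dif_pos]
    _ = ∑ w : ((R ∙ x).comap M.subtype).map θ, Γ w :=
        Fintype.sum_bijective
          (fun z : (R ∙ x).comap M.subtype =>
            (⟨θ z, Submodule.mem_map_of_mem z.2⟩ : ((R ∙ x).comap M.subtype).map θ))
          ⟨fun z z' h => Subtype.ext (hθ (congrArg Subtype.val h)),
            fun ⟨_, z, hz, hw⟩ => ⟨⟨z, hz⟩, Subtype.ext hw⟩⟩ _ _ fun _ => rfl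

open Classical in
lemma isNormHomWeight_one_sub_of_essential [Finite P]
    (hM : ∀ N : Submodule R R, N ≠ ⊥ → N ⊓ M ≠ ⊥) (θ : M →ₛₗ[σ] P) (hθ : Function.Injective θ)
    {Γ : P → ℝ} (hΓ0 : Γ 0 = 1) (hΓinv : ∀ v w, leftOrbit v = leftOrbit w → Γ v = Γ w)
    (hΓsum : ∀ (T : Submodule P P) [Fintype T], T ≠ ⊥ → ∑ w : T, Γ w = 0) :
    IsNormHomWeight fun x => 1 - if h : x ∈ M then Γ (θ ⟨x, h⟩) else 0 := by
  refine isNormHomWeight_one_sub ?_ (fun x y hxy => ?_) (fun x hx => ?_)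
  · rw [dif_pos M.zero_mem]
    exact (congrArg Γ θ.map_zero).trans hΓ0
  · by_cases hx : x ∈ M
    · have hy := (mem_iff_of_leftOrbit_eq M hxy).mp hx
      rw [dif_pos hx, dif_pos hy,
        hΓinv _ _ (leftOrbit_eq_of_leftOrbit_coe_eq θ (x := ⟨x, hx⟩) (y := ⟨y, hy⟩) hxy)]
    · rw [dif_neg hx, dif_neg (mt (mem_iff_of_leftOrbit_eq M hxy).mpr hx)]
  · have := Fintype.ofFinite (((R ∙ x).comap M.subtype).map θ)
    rw [sum_leftOrbit_dite_eq_sum_map θ hθ Γ x]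
    refine hΓsum _ fun hbot => ?_
    obtain ⟨y, hy, hy0⟩ := (Submodule.ne_bot_iff _).mp
      (hM _ (Submodule.span_singleton_eq_bot.not.mpr hx))
    have hθy : θ ⟨y, hy.2⟩ = 0 := by
      rw [← Submodule.mem_bot P, ← hbot]
      exact Submodule.mem_map_of_mem (p := (R ∙ x).comap M.subtype) (r := ⟨y, hy.2⟩) hy.1
    exact hy0 (congrArg Subtype.val (hθ (hθy.trans θ.map_zero.symm)))

end semilinear

open Classical in
theorem homogeneous_weight_general_frobenius_general
    {R : Type*} [Ring R] [Finite R]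
    (t : ℕ) (mdim : Fin t → ℕ)
    (F : Fin t → Type*) [∀ i, Field (F i)] [∀ i, Fintype (F i)]
    (q : Fin t → ℕ) (hq : ∀ i, Fintype.card (F i) = q i)
    {S : Type*} [Ring S]
    (π : R →+* S) (hπ : Function.Surjective π)
    (ψ : ringSocle R ≃+ S)
    (hψ : ∀ (r : R) (x : ringSocle R), ψ (r • x) = π r * ψ x)
    (ϕ : S ≃+* ∀ i, Matrix (Fin (mdim i)) (Fin (mdim i)) (F i))
    (ω : R → ℝ)
    (hω : ∀ x : R, ω x = if h : x ∈ ringSocle R then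
        1 - ∏ i : Fin t,
          ((-1 : ℝ) ^ (ϕ (ψ ⟨x, h⟩) i).rank
            * (q i : ℝ) ^ ((ϕ (ψ ⟨x, h⟩) i).rank * ((ϕ (ψ ⟨x, h⟩) i).rank - 1) / 2)
            / ∏ l ∈ Finset.range (ϕ (ψ ⟨x, h⟩) i).rank, ((q i : ℝ) ^ (mdim i) - (q i : ℝ) ^ l))
      else 1) :
    IsNormHomWeight ω ∧ (∀ x ∈ ringSocle R, ω x ≠ 1) ∧
      {x : R | ω x = 1} = ((ringSocle R : Set R))ᶜ := by
  obtain rfl : q = fun i => Fintype.card (F i) := funext fun i => (hq i).symm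
  let σ : R →+* ∀ i, Matrix (Fin (mdim i)) (Fin (mdim i)) (F i) := (ϕ : S →+* _).comp π
  have : RingHomSurjective σ := ⟨ϕ.surjective.comp hπ⟩
  let θ : ringSocle R →ₛₗ[σ] ∀ i, Matrix (Fin (mdim i)) (Fin (mdim i)) (F i) :=
    { toFun := fun x => ϕ (ψ x)
      map_add' := by simp
      map_smul' := fun r x => by simp [hψ, σ] }
  have hω' : ω = fun x => 1 - if h : x ∈ ringSocle R then piRankCoeff (θ ⟨x, h⟩) else 0 := by
    funext x
    rw [hω]
    split_ifs
    · simp only [piRankCoeff, Fintype.card_fin]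
      rfl
    · rw [sub_zero]
  refine ⟨hω' ▸ isNormHomWeight_one_sub_of_essential (fun _ => inf_ringSocle_ne_bot) θ
    (ϕ.injective.comp ψ.injective) piRankCoeff_zero (fun _ _ => piRankCoeff_eq_of_leftOrbit_eq)
    (fun T _ => sum_piRankCoeff_eq_zero T), fun x hx => ?_, ?_⟩
  · simpa [hω', hx] using piRankCoeff_ne_zero _
  · ext x
    by_cases hx : x ∈ ringSocle R <;> simp [hω', hx, piRankCoeff_ne_zero]

open Classical in
theorem homogeneous_weight_general_frobenius
    {R : Type*} [Ring R] [Finite R]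
    (t : ℕ) (mdim : Fin t → ℕ) (hm : ∀ i, 0 < mdim i)
    (F : Fin t → Type*) [∀ i, Field (F i)] [∀ i, Fintype (F i)]
    (q : Fin t → ℕ) (hq : ∀ i, Fintype.card (F i) = q i)
    {S : Type*} [Ring S]
    (π : R →+* S) (hπ : Function.Surjective π)
    (hker : RingHom.ker π = (⊥ : Ideal R).jacobson)
    (ψ : ringSocle R ≃+ S)
    (hψ : ∀ (r : R) (x : ringSocle R), ψ (r • x) = π r * ψ x)
    (ϕ : S ≃+* ∀ i, Matrix (Fin (mdim i)) (Fin (mdim i)) (F i))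
    (ω : R → ℝ)
    (hω : ∀ x : R, ω x = if h : x ∈ ringSocle R then
        1 - ∏ i : Fin t,
          ((-1 : ℝ) ^ (ϕ (ψ ⟨x, h⟩) i).rank
            * (q i : ℝ) ^ ((ϕ (ψ ⟨x, h⟩) i).rank * ((ϕ (ψ ⟨x, h⟩) i).rank - 1) / 2)
            / ∏ l ∈ Finset.range (ϕ (ψ ⟨x, h⟩) i).rank, ((q i : ℝ) ^ (mdim i) - (q i : ℝ) ^ l))
      else 1) :
    IsNormHomWeight ω ∧ (∀ x ∈ ringSocle R, ω x ≠ 1) ∧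
      {x : R | ω x = 1} = ((ringSocle R : Set R))ᶜ :=
  homogeneous_weight_general_frobenius_general t mdim F q hq π hπ ψ hψ ϕ ω hω
end

section
/- Let R be a finite ring with Jacobson radical J and socle soc(R) (as a left R-module). Suppose there are given a left R-module isomorphism ψ : soc(R) → R/J and a ring isomorphism ϕ : R/J → ∏_{i=1}^{t} Matrix (Fin m_i) (Fin m_i) F_i, where each F_i is a finite field with q_i elements and each m_i is a positive integer. Define ω : R → ℝ by: for x ∈ soc(R), ω(x) = 1 − ∏_{i=1}^{t} ( (−1)^(r_i) · q_i^(r_i(r_i−1)/2) / ∏_{l=0}^{r_i−1} (q_i^(m_i) − q_i^l) ), where r_i is the rank of the i-th component of ϕ(ψ(x)); and ω(x) = 1 for x ∉ soc(R). Then there exists a nonzero x ∈ R with ω(x) = 0 if and only if there exist at least two distinct indices i ∈ {1,…,t} with m_i = 1 and q_i = 2. -/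
/-- The per-factor homogeneous-weight term. -/
private noncomputable def wterm (Q m r : ℕ) : ℝ :=
  (-1:ℝ)^r * (Q:ℝ)^(r*(r-1)/2) / ∏ l ∈ Finset.range r, ((Q:ℝ)^m - (Q:ℝ)^l)

private lemma wt_facts {Q m r : ℕ} (hQ : 2 ≤ Q) (hrm : r ≤ m) :
    wterm Q m r = (-1:ℝ)^r * |wterm Q m r| ∧ |wterm Q m r| ≤ 1 ∧
      (|wterm Q m r| = 1 → r = 0 ∨ (r = 1 ∧ m = 1 ∧ Q = 2)) := by
  have hQ1 : (1:ℝ) < (Q:ℝ) := by exact_mod_cast hQ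
  have hQ0 : (0:ℝ) < (Q:ℝ) := by linarith
  set N : ℝ := ∏ l ∈ Finset.range r, (Q:ℝ)^l with hN
  set D : ℝ := ∏ l ∈ Finset.range r, ((Q:ℝ)^m - (Q:ℝ)^l) with hD
  have hfle : ∀ l ∈ Finset.range r, (Q:ℝ)^l ≤ (Q:ℝ)^m - (Q:ℝ)^l := by
    intro l hl
    have hlm : l < m := lt_of_lt_of_le (Finset.mem_range.mp hl) hrm
    have h1 : (Q:ℝ)^(l+1) ≤ (Q:ℝ)^m := pow_le_pow_right₀ (le_of_lt hQ1) hlm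
    have hQ2r : (2:ℝ) ≤ (Q:ℝ) := by exact_mod_cast hQ
    have h2 : 2*(Q:ℝ)^l ≤ (Q:ℝ)^(l+1) := by
      rw [pow_succ]
      nlinarith [mul_nonneg (by linarith : (0:ℝ) ≤ (Q:ℝ)-2) (pow_pos hQ0 l).le]
    linarith
  have hfpos : ∀ l ∈ Finset.range r, (0:ℝ) < (Q:ℝ)^l := fun l _ => pow_pos hQ0 l
  have hDpos : 0 < D := Finset.prod_pos (fun l hl => lt_of_lt_of_le (hfpos l hl) (hfle l hl))
  have hNpos : 0 < N := Finset.prod_pos hfpos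
  have hNle : N ≤ D := Finset.prod_le_prod (fun l hl => (hfpos l hl).le) hfle
  have hnum : (Q:ℝ)^(r*(r-1)/2) = N := by
    rw [hN, Finset.prod_pow_eq_pow_sum, Finset.sum_range_id]
  have hw : wterm Q m r = (-1:ℝ)^r * (N / D) := by
    rw [wterm, hnum, ← hD]; ring
  have habs : |wterm Q m r| = N / D := by
    rw [hw, abs_mul, abs_pow, abs_neg, abs_one, one_pow, one_mul,
      abs_of_pos (div_pos hNpos hDpos)]
  refine ⟨by rw [habs, hw], by rw [habs]; exact div_le_one_of_le₀ hNle hDpos.le, ?_⟩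
  intro h1
  by_cases hr0 : r = 0
  · exact Or.inl hr0
  by_cases hc : Q = 2 ∧ m = 1
  · right
    have : r ≤ 1 := hc.2 ▸ hrm
    exact ⟨by omega, hc.2, hc.1⟩
  · exfalso
    have hm1 : 1 ≤ m := le_trans (Nat.pos_of_ne_zero hr0) hrm
    have h3n : 3 ≤ Q ^ m := by
      rcases Nat.eq_or_lt_of_le hm1 with h | h
      · have hQ2 : Q ≠ 2 := fun hQ2 => hc ⟨hQ2, h.symm⟩
        calc 3 ≤ Q := by omega
          _ = Q ^ m := by rw [← h, pow_one]
      · calc 3 ≤ 2 ^ 2 := by norm_num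
          _ ≤ Q ^ 2 := Nat.pow_le_pow_left hQ 2
          _ ≤ Q ^ m := Nat.pow_le_pow_right (by omega) h
    have h3r : (3:ℝ) ≤ (Q:ℝ)^m := by exact_mod_cast h3n
    have hlt : N < D := by
      refine Finset.prod_lt_prod hfpos hfle
        ⟨0, Finset.mem_range.mpr (Nat.pos_of_ne_zero hr0), ?_⟩
      simp only [pow_zero]
      linarith
    rw [habs] at h1
    have := (div_eq_one_iff_eq hDpos.ne').mp h1
    linarith

private lemma rank_ne_zero_of_ne_zero {n : ℕ} {K : Type*} [Field K]
    {M : Matrix (Fin n) (Fin n) K} (h : M ≠ 0) : M.rank ≠ 0 := by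
  intro h0
  apply h
  rw [Matrix.rank, Submodule.finrank_eq_zero, LinearMap.range_eq_bot] at h0
  ext i j
  have h2 : M.mulVecLin (Pi.single j 1) = 0 := by rw [h0]; rfl
  simpa [Matrix.mulVecLin_apply, Matrix.mulVec_single] using congrFun h2 i

private lemma prod_abs_eq_one {ι : Type*} [Fintype ι] [DecidableEq ι] {f : ι → ℝ}
    (h0 : ∀ i, 0 ≤ f i) (h1 : ∀ i, f i ≤ 1) (hp : ∏ i, f i = 1) : ∀ i, f i = 1 := by
  intro j
  refine le_antisymm (h1 j) ?_
  have heq := Finset.mul_prod_erase Finset.univ f (Finset.mem_univ j)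
  have hle : ∏ i ∈ Finset.univ.erase j, f i ≤ 1 :=
    Finset.prod_le_one (fun i _ => h0 i) (fun i _ => h1 i)
  nlinarith [mul_nonneg (h0 j) (sub_nonneg.mpr hle)]

open Classical in
theorem homogeneous_weight_zero_iff_two_binary_field_factors
    {R : Type*} [Ring R] [Finite R]
    (t : ℕ) (mdim : Fin t → ℕ) (hm : ∀ i, 0 < mdim i)
    (F : Fin t → Type*) [∀ i, Field (F i)] [∀ i, Fintype (F i)]
    (q : Fin t → ℕ) (hq : ∀ i, Fintype.card (F i) = q i)
    {S : Type*} [Ring S]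
    (π : R →+* S) (hπ : Function.Surjective π)
    (hker : RingHom.ker π = (⊥ : Ideal R).jacobson)
    (ψ : ringSocle R ≃+ S)
    (hψ : ∀ (r : R) (x : ringSocle R), ψ (r • x) = π r * ψ x)
    (ϕ : S ≃+* ∀ i, Matrix (Fin (mdim i)) (Fin (mdim i)) (F i))
    (ω : R → ℝ)
    (hω : ∀ x : R, ω x = if h : x ∈ ringSocle R then
        1 - ∏ i : Fin t,
          ((-1 : ℝ) ^ (ϕ (ψ ⟨x, h⟩) i).rank
            * (q i : ℝ) ^ ((ϕ (ψ ⟨x, h⟩) i).rank * ((ϕ (ψ ⟨x, h⟩) i).rank - 1) / 2)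
            / ∏ l ∈ Finset.range (ϕ (ψ ⟨x, h⟩) i).rank, ((q i : ℝ) ^ (mdim i) - (q i : ℝ) ^ l))
      else 1) :
    (∃ x : R, x ≠ 0 ∧ ω x = 0) ↔
      ∃ i j : Fin t, i ≠ j ∧ mdim i = 1 ∧ q i = 2 ∧ mdim j = 1 ∧ q j = 2 := by
  have hq2 : ∀ i, 2 ≤ q i := fun i => (hq i) ▸ Fintype.one_lt_card
  constructor
  · rintro ⟨x, hx0, hxw⟩
    rw [hω x] at hxw
    by_cases hmem : x ∈ ringSocle R
    swap
    · rw [dif_neg hmem] at hxw; norm_num at hxw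
    rw [dif_pos hmem] at hxw
    set M := ϕ (ψ ⟨x, hmem⟩) with hM
    set rk : Fin t → ℕ := fun i => (M i).rank with hrk
    have hprod : ∏ i, wterm (q i) (mdim i) (rk i) = 1 := (sub_eq_zero.mp hxw).symm
    have hrkle : ∀ i, rk i ≤ mdim i := fun i => by
      simpa using Matrix.rank_le_card_height (M i)
    have hfacts := fun i => wt_facts (hq2 i) (hrkle i)
    have habs1 : ∀ i, |wterm (q i) (mdim i) (rk i)| = 1 := by
      apply prod_abs_eq_one (fun i => abs_nonneg _) (fun i => (hfacts i).2.1)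
      rw [← Finset.abs_prod, hprod, abs_one]
    have hclass : ∀ i, rk i = 0 ∨ (rk i = 1 ∧ mdim i = 1 ∧ q i = 2) :=
      fun i => (hfacts i).2.2 (habs1 i)
    have hsign : ∀ i, wterm (q i) (mdim i) (rk i) = (-1:ℝ)^(rk i) := by
      intro i; rw [(hfacts i).1, habs1 i, mul_one]
    have hXne : ψ ⟨x, hmem⟩ ≠ 0 := by
      intro h0
      apply hx0
      have h1 : (⟨x, hmem⟩ : ringSocle R) = 0 := by
        apply ψ.injective; rw [h0, map_zero]
      exact congrArg Subtype.val h1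
    have hMne : M ≠ 0 := by
      intro h0
      apply hXne
      apply ϕ.injective
      rw [← hM, h0, map_zero]
    obtain ⟨i0, hi0⟩ : ∃ i, M i ≠ 0 := by
      by_contra hall; push_neg at hall; exact hMne (funext hall)
    have hrk0 : rk i0 ≠ 0 := rank_ne_zero_of_ne_zero hi0
    set A : Finset (Fin t) := Finset.univ.filter (fun i => rk i = 1) with hA
    have hsum : ∑ i, rk i = A.card := by
      rw [← Finset.sum_filter_add_sum_filter_not Finset.univ (fun i => rk i = 1) rk]
      have e1 : ∑ i ∈ A, rk i = A.card := by
        rw [Finset.card_eq_sum_ones]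
        exact Finset.sum_congr rfl (fun i hi => (Finset.mem_filter.mp hi).2)
      have e2 : ∑ i ∈ Finset.univ.filter (fun i => ¬ rk i = 1), rk i = 0 := by
        apply Finset.sum_eq_zero
        intro i hi
        rcases hclass i with h | h
        · exact h
        · exact absurd h.1 (Finset.mem_filter.mp hi).2
      rw [← hA, e1, e2, add_zero]
    have heven : Even A.card := by
      rw [← hsum]
      refine (neg_one_pow_eq_one_iff_even (R := ℝ) (by norm_num)).mp ?_
      rw [← Finset.prod_pow_eq_pow_sum]
      rw [show ∏ i, (-1:ℝ)^(rk i) = ∏ i, wterm (q i) (mdim i) (rk i) from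
        Finset.prod_congr rfl (fun i _ => (hsign i).symm)]
      exact hprod
    have hi0A : i0 ∈ A := by
      rw [hA, Finset.mem_filter]
      rcases hclass i0 with h | h
      · exact absurd h hrk0
      · exact ⟨Finset.mem_univ _, h.1⟩
    have hcard2 : 1 < A.card := by
      have h1 : 0 < A.card := Finset.card_pos.mpr ⟨i0, hi0A⟩
      rcases heven with ⟨k, hk⟩
      omega
    obtain ⟨a, ha, b, hb, hab⟩ := Finset.one_lt_card.mp hcard2
    have hmq : ∀ c ∈ A, mdim c = 1 ∧ q c = 2 := by
      intro c hc
      have hc1 : rk c = 1 := (Finset.mem_filter.mp hc).2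
      rcases hclass c with h | h
      · omega
      · exact ⟨h.2.1, h.2.2⟩
    exact ⟨a, b, hab, (hmq a ha).1, (hmq a ha).2, (hmq b hb).1, (hmq b hb).2⟩
  · rintro ⟨i, j, hij, hmi, hqi, hmj, hqj⟩
    set Mm : ∀ k, Matrix (Fin (mdim k)) (Fin (mdim k)) (F k) :=
      fun k => if k = i ∨ k = j then 1 else 0 with hMm
    set X : ringSocle R := ψ.symm (ϕ.symm Mm) with hX
    have hMmne : Mm ≠ 0 := by
      intro h0
      have h1 : Mm i = 0 := by rw [h0]; rfl
      rw [hMm] at h1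
      simp only [if_pos (Or.inl rfl)] at h1
      have h2 := congrFun (congrFun h1 ⟨0, hm i⟩) ⟨0, hm i⟩
      simp [Matrix.one_apply] at h2
    refine ⟨X.val, ?_, ?_⟩
    · intro h0
      apply hMmne
      have hX0 : X = 0 := ZeroMemClass.coe_eq_zero.mp h0
      have h1 : ϕ.symm Mm = 0 := by
        have := congrArg ψ hX0
        rwa [hX, AddEquiv.apply_symm_apply, map_zero] at this
      have := congrArg ϕ h1
      rwa [RingEquiv.apply_symm_apply, map_zero] at this
    · rw [hω]
      rw [dif_pos X.2]
      have hrank : ∀ k, (Mm k).rank = if k = i ∨ k = j then 1 else 0 := by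
        intro k
        by_cases h : k = i ∨ k = j
        · have h1 : Mm k = 1 := by simp only [hMm]; rw [if_pos h]
          rw [h1, if_pos h, Matrix.rank_one, Fintype.card_fin]
          rcases h with h | h
          · rw [h, hmi]
          · rw [h, hmj]
        · have h1 : Mm k = 0 := by simp only [hMm]; rw [if_neg h]
          rw [h1, if_neg h, Matrix.rank_zero]
      have hterm : ∀ k, wterm (q k) (mdim k) ((Mm k).rank) =
          if k ∈ ({i, j} : Finset (Fin t)) then (-1:ℝ) else 1 := by
        intro k
        rw [hrank k]
        have hmemiff : (k ∈ ({i, j} : Finset (Fin t))) ↔ (k = i ∨ k = j) := by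
          simp [Finset.mem_insert, Finset.mem_singleton]
        by_cases h : k = i ∨ k = j
        · rw [if_pos h, if_pos (hmemiff.mpr h)]
          have hmq : mdim k = 1 ∧ q k = 2 := by
            rcases h with h | h <;> subst h
            · exact ⟨hmi, hqi⟩
            · exact ⟨hmj, hqj⟩
          rw [wterm, hmq.1, hmq.2]
          norm_num
        · rw [if_neg h, if_neg (fun hc => h (hmemiff.mp hc)), wterm]
          simp
      have hP : ∏ k : Fin t, wterm (q k) (mdim k) ((Mm k).rank) = 1 := by
        rw [Finset.prod_congr rfl (fun k _ => hterm k), Finset.prod_ite_mem,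
          Finset.univ_inter, Finset.prod_const, Finset.card_pair hij]
        norm_num
      have hXX : (⟨X.val, X.2⟩ : ringSocle R) = X := rfl
      calc (1:ℝ) - ∏ k : Fin t,
            ((-1 : ℝ) ^ (ϕ (ψ ⟨X.val, X.2⟩) k).rank
              * (q k : ℝ) ^ ((ϕ (ψ ⟨X.val, X.2⟩) k).rank * ((ϕ (ψ ⟨X.val, X.2⟩) k).rank - 1) / 2)
              / ∏ l ∈ Finset.range (ϕ (ψ ⟨X.val, X.2⟩) k).rank,
                  ((q k : ℝ) ^ (mdim k) - (q k : ℝ) ^ l))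
          = 1 - ∏ k : Fin t, wterm (q k) (mdim k) ((Mm k).rank) := by
            rw [hXX, hX, AddEquiv.apply_symm_apply, RingEquiv.apply_symm_apply]
            rfl
        _ = 0 := by rw [hP]; ring
end

section
/- Let F be a finite field and let χ̃ be a nontrivial additive character of F (i.e., χ̃ is not the constant character 1). Let m be a positive integer and R = Matrix (Fin m) (Fin m) F. Then the map sending M ∈ R to the additive character X ↦ χ̃(trace(X*M)) of R is a bijection from R onto the group of additive characters of R. In particular, the character A ↦ χ̃(trace(A)) is a generating character of R, and it is symmetric: χ̃(trace(A*B)) = χ̃(trace(B*A)) for all A, B ∈ R. -/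
/-!
Evaluating `traceChar χ M` on the elementary matrices `single j i c` gives `c ↦ χ (M i j * c)`,
and a nontrivial character of a field is primitive, so these shifts determine every entry of
`M`: the map `M ↦ traceChar χ M` is injective. A finite abelian group has as many `ℂˣ`-valued
characters as elements, so it is a bijection by counting.
-/

/-- The additive character `X ↦ χ(trace (X * M))` of the matrix ring, built from an additive
character `χ` of the field `F` and a matrix `M`. -/
noncomputable def traceChar {F : Type*} [Field F] {m : ℕ}
    (χ : AddChar F ℂˣ) (M : Matrix (Fin m) (Fin m) F) :
    AddChar (Matrix (Fin m) (Fin m) F) ℂˣ :=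
  χ.compAddMonoidHom ((Matrix.traceAddMonoidHom (Fin m) F).comp (AddMonoidHom.mulRight M))

lemma AddChar.card_units_complex_eq (A : Type*) [AddCommGroup A] [Finite A] :
    Nat.card (AddChar A ℂˣ) = Nat.card A := by
  have : NeZero (Monoid.exponent (Multiplicative A) : ℂ) :=
    ⟨Nat.cast_ne_zero.2 Monoid.exponent_ne_zero_of_finite⟩
  rw [Nat.card_congr AddChar.toMonoidHomEquiv,
    CommGroup.card_monoidHom_of_hasEnoughRootsOfUnity, Nat.card_congr Multiplicative.toAdd]

instance AddChar.instFiniteUnitsComplex (A : Type*) [AddCommGroup A] [Finite A] :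
    Finite (AddChar A ℂˣ) :=
  Nat.finite_of_card_ne_zero <| by
    rw [AddChar.card_units_complex_eq]
    exact Nat.card_pos (α := A).ne'

section

variable {F : Type*} [Field F] {m : ℕ}

lemma traceChar_apply (χ : AddChar F ℂˣ) (M X : Matrix (Fin m) (Fin m) F) :
    traceChar χ M X = χ (Matrix.trace (X * M)) := rfl

lemma traceChar_single (χ : AddChar F ℂˣ) (M : Matrix (Fin m) (Fin m) F) (i j : Fin m)
    (c : F) : traceChar χ M (Matrix.single j i c) = χ.mulShift (M i j) c := by
  simp [traceChar_apply, Matrix.trace_single_mul, mul_comm]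

lemma traceChar_injective {χ : AddChar F ℂˣ} (hχ : χ.IsPrimitive) :
    Function.Injective (traceChar (m := m) χ) := by
  intro M₁ M₂ h
  ext i j
  apply AddChar.to_mulShift_inj_of_isPrimitive hχ
  refine DFunLike.ext _ _ fun c ↦ ?_
  rw [← traceChar_single, ← traceChar_single, h]

lemma traceChar_bijective [Finite F] {χ : AddChar F ℂˣ} (hχ : χ.IsPrimitive) :
    Function.Bijective (traceChar (m := m) χ) :=
  (traceChar_injective hχ).bijective_of_nat_card_le (AddChar.card_units_complex_eq _).le

end

theorem trace_character_generating_and_symmetric_general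
    {F : Type*} [Field F] [Fintype F] (χ : AddChar F ℂˣ) (hχ : χ ≠ 1)
    (m : ℕ) :
    Function.Bijective (traceChar (F := F) (m := m) χ) ∧
    (∀ ψ : AddChar (Matrix (Fin m) (Fin m) F) ℂˣ,
      ∃ M : Matrix (Fin m) (Fin m) F, ∀ X : Matrix (Fin m) (Fin m) F,
        ψ X = χ (Matrix.trace (X * M))) ∧
    (∀ A B : Matrix (Fin m) (Fin m) F,
      χ (Matrix.trace (A * B)) = χ (Matrix.trace (B * A))) := by
  have hbij := traceChar_bijective (m := m) (AddChar.IsPrimitive.of_ne_one hχ)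
  refine ⟨hbij, fun ψ ↦ ?_, fun A B ↦ by rw [Matrix.trace_mul_comm]⟩
  obtain ⟨M, rfl⟩ := hbij.surjective ψ
  exact ⟨M, traceChar_apply χ M⟩

theorem trace_character_generating_and_symmetric
    {F : Type*} [Field F] [Fintype F] (χ : AddChar F ℂˣ) (hχ : χ ≠ 1)
    (m : ℕ) (hm : 0 < m) :
    Function.Bijective (traceChar (F := F) (m := m) χ) ∧
    (∀ ψ : AddChar (Matrix (Fin m) (Fin m) F) ℂˣ,
      ∃ M : Matrix (Fin m) (Fin m) F, ∀ X : Matrix (Fin m) (Fin m) F,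
        ψ X = χ (Matrix.trace (X * M))) ∧
    (∀ A B : Matrix (Fin m) (Fin m) F,
      χ (Matrix.trace (A * B)) = χ (Matrix.trace (B * A))) :=
  trace_character_generating_and_symmetric_general χ hχ m
end

section
/- Every finite semisimple ring R admits a symmetric generating character: there exists an additive character χ of R such that χ(a*b) = χ(b*a) for all a, b ∈ R, and every additive character of R equals x ↦ χ(x*r) for some r ∈ R. -/
/-!
By Wedderburn–Artin, `R ≃+* Π i, Matrix (Fin dᵢ) (Fin dᵢ) Dᵢ` with each `Dᵢ` a finite division
ring, hence a field. Pick a nontrivial character `ψᵢ` of each `Dᵢ` and put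
`χ x = ∏ i, ψᵢ (trace xᵢ)`. Then `χ (a * b) = χ (b * a)` because `ψᵢ ∘ trace` only sees the
products `aₖₗ bₗₖ` of commuting field elements, and `χ` is nondegenerate (`x ↦ χ (a * x)` is
nontrivial for `a ≠ 0`) by testing against matrix units. Nondegeneracy makes `r ↦ (x ↦ χ (r * x))`
injective, and since a finite abelian group has as many complex characters as elements, this map
is onto all characters of `R`.
-/

namespace AddChar

variable {M : Type*} [CommMonoid M]

lemma map_sum_eq_prod {A ι : Type*} [AddCommMonoid A] (ψ : AddChar A M) (s : Finset ι)
    (f : ι → A) : ψ (∑ i ∈ s, f i) = ∏ i ∈ s, ψ (f i) := by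
  induction s using Finset.cons_induction with
  | empty => simp
  | cons i s hi ih => rw [Finset.sum_cons, map_add_eq_mul, ih, Finset.prod_cons]

section Ring

variable {R S : Type*} [Ring R] [Ring S]

def IsSymmetric (χ : AddChar R M) : Prop := ∀ a b, χ (a * b) = χ (b * a)

-- The noncommutative analogue of `AddChar.IsPrimitive`.
def IsNondegenerate (χ : AddChar R M) : Prop := ∀ ⦃a : R⦄, a ≠ 0 → mulShift χ a ≠ 1

lemma IsSymmetric.compRingHom {χ : AddChar S M} (hχ : χ.IsSymmetric) (f : R →+* S) :
    (χ.compAddMonoidHom f.toAddMonoidHom).IsSymmetric := fun a b => by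
  simpa using hχ (f a) (f b)

lemma IsNondegenerate.compRingEquiv {χ : AddChar S M} (hχ : χ.IsNondegenerate) (e : R ≃+* S) :
    (χ.compAddMonoidHom e.toAddMonoidHom).IsNondegenerate := fun a ha => by
  obtain ⟨x, hx⟩ := ne_one_iff.1 (hχ (e.map_ne_zero_iff.2 ha))
  exact ne_one_iff.2 ⟨e.symm x, by simpa using hx⟩

end Ring

lemma IsSymmetric.of_comm {R : Type*} [CommRing R] (χ : AddChar R M) : χ.IsSymmetric :=
  fun a b => by rw [mul_comm]

lemma IsNondegenerate.of_ne_one {D : Type*} [DivisionRing D] {χ : AddChar D M} (hχ : χ ≠ 1) :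
    χ.IsNondegenerate := fun a ha h => hχ <| by
  rw [← mulShift_one χ, ← mul_inv_cancel₀ ha, ← mulShift_mulShift, h]
  ext; simp

section Pi

variable {ι : Type*} [Fintype ι] {R : ι → Type*} [∀ i, Ring (R i)]

def pi (χ : ∀ i, AddChar (R i) M) : AddChar (∀ i, R i) M :=
  ∏ i, (χ i).compAddMonoidHom (Pi.evalAddMonoidHom R i)

lemma pi_apply (χ : ∀ i, AddChar (R i) M) (x : ∀ i, R i) : pi χ x = ∏ i, χ i (x i) := by
  simp [pi, prod_apply]

lemma IsSymmetric.pi {χ : ∀ i, AddChar (R i) M} (hχ : ∀ i, (χ i).IsSymmetric) :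
    (pi χ).IsSymmetric := fun a b => by
  simp only [pi_apply, Pi.mul_apply, hχ _ (a _)]

lemma IsNondegenerate.pi {χ : ∀ i, AddChar (R i) M} (hχ : ∀ i, (χ i).IsNondegenerate) :
    (pi χ).IsNondegenerate := fun a ha => by
  classical
  obtain ⟨i, hi⟩ := Function.ne_iff.1 ha
  obtain ⟨y, hy⟩ := ne_one_iff.1 (hχ i hi)
  refine ne_one_iff.2 ⟨Pi.single i y, ?_⟩
  rwa [mulShift_apply, pi_apply, Finset.prod_eq_single i (fun j _ hj => by simp [hj]) (by simp),
    Pi.mul_apply, Pi.single_eq_same]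

end Pi

section Matrix

variable {n : Type*} [Fintype n] {S : Type*} [Ring S]

def matrixTrace (χ : AddChar S M) : AddChar (Matrix n n S) M :=
  χ.compAddMonoidHom (Matrix.traceAddMonoidHom n S)

lemma matrixTrace_apply (χ : AddChar S M) (A : Matrix n n S) : χ.matrixTrace A = χ A.trace := rfl

variable [DecidableEq n]

lemma IsSymmetric.matrixTrace {χ : AddChar S M} (hχ : χ.IsSymmetric) :
    (χ.matrixTrace (n := n)).IsSymmetric := fun A B => by
  simp only [matrixTrace_apply, Matrix.trace, Matrix.diag, Matrix.mul_apply, map_sum_eq_prod]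
  rw [Finset.prod_comm]
  simp only [hχ (A _ _)]

lemma IsNondegenerate.matrixTrace {χ : AddChar S M} (hχ : χ.IsNondegenerate) :
    (χ.matrixTrace (n := n)).IsNondegenerate := fun A hA => by
  classical
  obtain ⟨i, j, hij⟩ : ∃ i j, A i j ≠ 0 := by simpa [← Matrix.ext_iff] using hA
  obtain ⟨y, hy⟩ := ne_one_iff.1 (hχ hij)
  refine ne_one_iff.2 ⟨Matrix.single j i y, ?_⟩
  rwa [mulShift_apply, matrixTrace_apply, Matrix.trace_mul_single, op_smul_eq_mul]

end Matrix

section Complex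

variable {A : Type*} [AddCommGroup A] [Finite A]

lemma exists_ne_one_of_nontrivial [Nontrivial A] : ∃ χ : AddChar A ℂˣ, χ ≠ 1 := by
  obtain ⟨a, ha⟩ := exists_ne (0 : A)
  obtain ⟨φ, hφ⟩ := CommGroup.exists_apply_ne_one_of_hasEnoughRootsOfUnity (Multiplicative A) ℂ
    (a := .ofAdd a) ha
  exact ⟨toMonoidHomEquiv.symm φ, ne_one_iff.2 ⟨a, hφ⟩⟩

lemma natCard_eq : Nat.card (AddChar A ℂˣ) = Nat.card A :=
  (Nat.card_congr toMonoidHomEquiv).trans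
    (CommGroup.card_monoidHom_of_hasEnoughRootsOfUnity (Multiplicative A) ℂ)

variable {R : Type*} [Ring R] [Finite R]

lemma IsNondegenerate.mulShift_bijective {χ : AddChar R ℂˣ} (hχ : χ.IsNondegenerate) :
    Function.Bijective χ.mulShift := by
  have : Finite (AddChar R ℂˣ) :=
    Nat.finite_of_card_ne_zero (by rw [natCard_eq]; exact Nat.card_pos.ne')
  refine Function.Injective.bijective_of_nat_card_le (fun a b h => ?_) natCard_eq.le
  by_contra hab
  apply hχ (sub_ne_zero.2 hab)
  rw [sub_eq_add_neg, ← mulShift_mul, h, mulShift_mul, add_neg_cancel, mulShift_zero]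

lemma exists_isSymmetric_isNondegenerate_of_divisionRing (D : Type*) [DivisionRing D] [Finite D] :
    ∃ χ : AddChar D ℂˣ, χ.IsSymmetric ∧ χ.IsNondegenerate := by
  obtain ⟨χ, hχ⟩ := exists_ne_one_of_nontrivial (A := D)
  -- `IsSymmetric.of_comm` applies through the instance `littleWedderburn : Field D`.
  exact ⟨χ, IsSymmetric.of_comm χ, IsNondegenerate.of_ne_one hχ⟩

end Complex

end AddChar

theorem finite_semisimple_ring_has_symmetric_generating_character
    (R : Type*) [Ring R] [Finite R] [IsSemisimpleRing R] :
    ∃ χ : AddChar R ℂˣ,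
      (∀ a b : R, χ (a * b) = χ (b * a)) ∧
      (∀ ψ : AddChar R ℂˣ, ∃ r : R, ∀ x : R, ψ x = χ (x * r)) := by
  obtain ⟨n, D, d, _, _, ⟨e⟩⟩ := IsSemisimpleRing.exists_ringEquiv_pi_matrix_divisionRing R
  have (i : Fin n) : Finite (D i) := Finite.of_surjective (fun r => e r i 0 0)
    ((Function.surjective_eval 0).comp <| (Function.surjective_eval 0).comp <|
      (Function.surjective_eval i).comp e.surjective)
  choose χ hsym hnd using fun i => AddChar.exists_isSymmetric_isNondegenerate_of_divisionRing (D i)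
  let χR := (AddChar.pi fun i => (χ i).matrixTrace).compAddMonoidHom e.toAddMonoidHom
  have hsymR : χR.IsSymmetric :=
    (AddChar.IsSymmetric.pi fun i => (hsym i).matrixTrace).compRingHom _
  have hndR : χR.IsNondegenerate :=
    (AddChar.IsNondegenerate.pi fun i => (hnd i).matrixTrace).compRingEquiv e
  refine ⟨χR, hsymR, fun ψ => ?_⟩
  obtain ⟨r, rfl⟩ := hndR.mulShift_bijective.surjective ψ
  exact ⟨r, fun x => hsymR r x⟩
end

section
/- Let R be a finite semisimple ring and let χ be a generating character of R. Let P ⊆ R be a subset that is invariant under left and right multiplication by units, i.e., {u*a : a ∈ P} = P = {a*u : a ∈ P} for every unit u of R. Then for every b ∈ R, ∑_{a ∈ P} χ(a*b) = ∑_{a ∈ P} χ(b*a). -/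
/-!
A generating character `χ` defines the Nakayama automorphism `σ` of `R` by
`χ (r * x) = χ (x * σ r)`; it fixes the centre, and `∑ a ∈ P, χ (b * a) = ∑ a ∈ P, χ (a * σ b)`.
So it suffices that `σ b = u * b * v` for units `u, v`, since `P` is stable under both unit actions.

Let `τ` be any ring automorphism of a semisimple ring `A` fixing the centre. Each isotypic component
of `A` is a two-sided ideal, generated by a central idempotent, hence fixed by `τ`; therefore
`τ S ≅ S` for every simple left ideal `S`, and by decomposing, `τ I ≅ I` for every left ideal `I`.
An isomorphism `I ≅ τ I` together with `C ≅ τ C` for a complement `C` glues to an automorphism of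
the left module `A`, i.e. a right multiplication by a unit. Applied to `I = A b` this gives
`A (b * v) = A (τ b)`, and applied once more in `Aᵐᵒᵖ` it gives `τ b = u * (b * v)`.
-/

open Function

theorem AddChar.coeHom_compAddChar_surjective {A M : Type*} [AddGroup A] [Monoid M] :
    Surjective ((Units.coeHom M).compAddChar : AddChar A Mˣ → AddChar A M) := fun ψ =>
  ⟨toMonoidHomEquiv.symm (toMonoidHomEquiv ψ).toHomUnits, by ext; rfl⟩

section Nakayama

variable {R : Type*} [Ring R] (χ : AddChar R ℂˣ)

def AddChar.mulRightChar (r : R) : AddChar R ℂˣ := χ.compAddMonoidHom (AddMonoidHom.mulRight r)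

variable {χ} [Finite R] (hχ : ∀ ψ : AddChar R ℂˣ, ∃ r : R, ∀ x : R, ψ x = χ (x * r))
include hχ

theorem AddChar.bijective_mulRightChar : Bijective χ.mulRightChar := by
  have hsurj : Surjective χ.mulRightChar := fun ψ =>
    let ⟨r, hr⟩ := hχ ψ; ⟨r, DFunLike.ext _ _ fun x => (hr x).symm⟩
  have := Finite.of_surjective _ hsurj
  refine hsurj.bijective_of_nat_card_le ?_
  have := Fintype.ofFinite R
  calc Nat.card R = Nat.card (AddChar R ℂ) := by simp [Nat.card_eq_fintype_card]
    _ ≤ Nat.card (AddChar R ℂˣ) :=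
      Nat.card_le_card_of_surjective _ AddChar.coeHom_compAddChar_surjective

theorem AddChar.eq_zero_of_forall_mul_eq_one {r : R} (h : ∀ x, χ (r * x) = 1) : r = 0 := by
  refine AddChar.forall_apply_eq_zero.mp fun ψ => ?_
  obtain ⟨ψ, rfl⟩ := AddChar.coeHom_compAddChar_surjective ψ
  obtain ⟨s, hs⟩ := hχ ψ
  simp [hs, h]

noncomputable def AddChar.nakayama (r : R) : R :=
  (Equiv.ofBijective _ (bijective_mulRightChar hχ)).symm (χ.compAddMonoidHom (.mulLeft r))

theorem AddChar.apply_mul_eq_apply_mul_nakayama (r x : R) : χ (r * x) = χ (x * nakayama hχ r) := by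
  have := (Equiv.ofBijective _ (bijective_mulRightChar hχ)).apply_symm_apply
    (χ.compAddMonoidHom (.mulLeft r))
  exact (DFunLike.congr_fun this x).symm

theorem AddChar.nakayama_eq_of_forall {r s : R} (h : ∀ x, χ (r * x) = χ (x * s)) :
    nakayama hχ r = s :=
  (bijective_mulRightChar hχ).1 <| DFunLike.ext _ _ fun x =>
    (apply_mul_eq_apply_mul_nakayama hχ r x).symm.trans (h x)

noncomputable def AddChar.nakayamaHom : R →+* R where
  toFun := nakayama hχ
  map_one' := nakayama_eq_of_forall hχ fun x => by rw [one_mul, mul_one]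
  map_mul' r s := nakayama_eq_of_forall hχ fun x => by
    rw [mul_assoc, apply_mul_eq_apply_mul_nakayama hχ r, mul_assoc,
      apply_mul_eq_apply_mul_nakayama hχ s, mul_assoc]
  map_zero' := nakayama_eq_of_forall hχ fun x => by rw [zero_mul, mul_zero]
  map_add' r s := nakayama_eq_of_forall hχ fun x => by
    rw [add_mul, mul_add, map_add_eq_mul, map_add_eq_mul, apply_mul_eq_apply_mul_nakayama hχ r,
      apply_mul_eq_apply_mul_nakayama hχ s]

noncomputable def AddChar.nakayamaEquiv : R ≃+* R :=
  RingEquiv.ofBijective (nakayamaHom hχ) <| Finite.injective_iff_bijective.mp <|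
    (injective_iff_map_eq_zero _).mpr fun r hr => eq_zero_of_forall_mul_eq_one hχ fun x => by
      rw [apply_mul_eq_apply_mul_nakayama hχ, show nakayama hχ r = 0 from hr, mul_zero,
        map_zero_eq_one]

theorem AddChar.nakayama_of_mem_center {z : R} (hz : z ∈ Set.center R) : nakayama hχ z = z :=
  nakayama_eq_of_forall hχ fun x => by rw [Semigroup.mem_center_iff.mp hz x]

end Nakayama

noncomputable def Submodule.prodEquivOfDisjoint {R M : Type*} [Ring R] [AddCommGroup M] [Module R M]
    {p q : Submodule R M} (h : Disjoint p q) : (p × q) ≃ₗ[R] ↥(p ⊔ q) :=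
  (LinearEquiv.ofInjective (p.subtype.coprod q.subtype) <| by
    rw [← LinearMap.ker_eq_bot, LinearMap.ker_coprod_of_disjoint_range _ _ (by simpa using h),
      p.ker_subtype, q.ker_subtype, Submodule.prod_bot]).trans
  (.ofEq _ _ <| by rw [LinearMap.range_coprod, p.range_subtype, q.range_subtype])

section Units

variable {A : Type*} [Ring A]

theorem LinearEquiv.exists_unit_apply_eq_mul (e : A ≃ₗ[A] A) : ∃ u : Aˣ, ∀ z, e z = z * u := by
  have hmul : ∀ (e : A ≃ₗ[A] A) z, e z = z * e 1 := fun e z => by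
    simpa using e.map_smul z 1
  refine ⟨⟨e 1, e.symm 1, ?_, ?_⟩, hmul e⟩
  · rw [← hmul e.symm, e.symm_apply_apply]
  · rw [← hmul e, e.apply_symm_apply]

theorem Ideal.exists_unit_of_isCompl {I C J D : Ideal A} (hI : IsCompl I C) (hJ : IsCompl J D)
    (f : I ≃ₗ[A] J) (g : C ≃ₗ[A] D) : ∃ u : Aˣ, ∀ z : I, (f z : A) = z * u := by
  obtain ⟨u, hu⟩ := ((Submodule.prodEquivOfIsCompl I C hI).symm ≪≫ₗ f.prodCongr g ≪≫ₗ
    Submodule.prodEquivOfIsCompl J D hJ).exists_unit_apply_eq_mul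
  refine ⟨u, fun z => ?_⟩
  rw [← hu]
  simp

end Units

section Semisimple

variable {A : Type*} [Ring A] [IsSemisimpleRing A]

theorem IsSemisimpleRing.eq_zero_of_forall_mul_mul_eq_zero {y : A} (h : ∀ a, y * a * y = 0) :
    y = 0 := by
  obtain ⟨f, hf, hspan⟩ := IsSemisimpleRing.ideal_eq_span_idempotent (Ideal.span {y})
  obtain ⟨a, ha⟩ := Ideal.mem_span_singleton'.mp (hspan ▸ Ideal.mem_span_singleton_self y)
  obtain ⟨b, hb⟩ := Ideal.mem_span_singleton'.mp (hspan.symm ▸ Ideal.mem_span_singleton_self f)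
  have hf0 : f = 0 := calc
    f = b * y * (b * y) := by rw [hb, hf.eq]
    _ = b * (y * b * y) := by noncomm_ring
    _ = 0 := by rw [h, mul_zero]
  rw [← ha, hf0, mul_zero]

theorem IsIdempotentElem.mem_center_of_isTwoSided {e : A} (he : IsIdempotentElem e)
    [(Ideal.span {e}).IsTwoSided] : e ∈ Set.center A := by
  have hright : ∀ x, e * x * e = e * x := fun x => by
    obtain ⟨c, hc⟩ := Ideal.mem_span_singleton'.mp
      (Ideal.mul_mem_right x _ (Ideal.mem_span_singleton_self e))
    rw [← hc, mul_assoc, he.eq]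
  refine Semigroup.mem_center_iff.mpr fun x => ?_
  -- `y = (1 - e) x e` satisfies `y A y = 0` because `e A (1 - e) = 0`.
  have hy : ∀ a, e * a * (x * e - e * x * e) = 0 := fun a => by
    rw [mul_sub, ← mul_assoc, ← mul_assoc, ← mul_assoc, hright a, sub_self]
  have := IsSemisimpleRing.eq_zero_of_forall_mul_mul_eq_zero (y := x * e - e * x * e) fun a => by
    calc (x * e - e * x * e) * a * (x * e - e * x * e)
        = x * (e * a * (x * e - e * x * e)) - e * x * (e * a * (x * e - e * x * e)) := by
          noncomm_ring
      _ = 0 := by rw [hy, mul_zero, mul_zero, sub_self]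
  rw [sub_eq_zero.mp this, hright]

variable (τ : A ≃+* A) (hτ : ∀ z ∈ Set.center A, τ z = z)
include hτ

theorem Ideal.map_eq_self_of_isTwoSided (K : Ideal A) [K.IsTwoSided] : K.map τ = K := by
  obtain ⟨e, he, rfl⟩ := IsSemisimpleRing.ideal_eq_span_idempotent K
  rw [Ideal.map_span, Set.image_singleton, hτ e he.mem_center_of_isTwoSided]

theorem Ideal.nonempty_linearEquiv_map_of_isSimpleModule (S : Ideal A) [IsSimpleModule A S] :
    Nonempty (S ≃ₗ[A] S.map τ) := by
  have : Ideal.IsTwoSided (isotypicComponent A A S) :=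
    isFullyInvariant_iff_isTwoSided.mp (.isotypicComponent A A S)
  have hle : S.map τ ≤ isotypicComponent A A S := by
    rw [← Ideal.map_eq_self_of_isTwoSided τ hτ (isotypicComponent A A S)]
    exact Ideal.map_mono S.le_isotypicComponent
  have : IsSimpleModule A (S.map τ) := isSimpleModule_iff_isAtom.mpr <|
    ((Ideal.relIsoOfBijective (τ : A →+* A) τ.bijective).symm.isAtom_iff S).mpr
      (isSimpleModule_iff_isAtom.mp ‹_›)
  obtain ⟨e⟩ := isIsotypicOfType_submodule_iff.mp (.isotypicComponent A A S) _ hle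
  exact ⟨e.symm⟩

theorem Ideal.nonempty_linearEquiv_map (I : Ideal A) : Nonempty (I ≃ₗ[A] I.map τ) := by
  induction I using WellFoundedLT.induction with | _ I ih => ?_
  obtain rfl | ⟨S, hSI, hS⟩ := IsSemisimpleModule.eq_bot_or_exists_simple_le I
  · rw [Ideal.map_bot]
    exact ⟨.refl A _⟩
  obtain ⟨C, hC⟩ := exists_isCompl S
  have hdisj : Disjoint S (C ⊓ I) := hC.disjoint.mono_right inf_le_left
  have hI : I = S ⊔ C ⊓ I := by
    rw [← sup_inf_assoc_of_le C hSI, hC.codisjoint.eq_top, top_inf_eq]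
  have hlt : C ⊓ I < I := by
    refine inf_le_right.lt_of_ne fun h => (isSimpleModule_iff_isAtom.mp hS).1 ?_
    exact hdisj.eq_bot_of_le (hSI.trans h.ge)
  obtain ⟨eS⟩ := Ideal.nonempty_linearEquiv_map_of_isSimpleModule τ hτ S
  obtain ⟨eC⟩ := ih _ hlt
  have hdisj' : Disjoint (Ideal.map τ S) (Ideal.map τ (C ⊓ I)) :=
    hdisj.map_orderIso (Ideal.relIsoOfBijective (τ : A →+* A) τ.bijective).symm
  have hI' : I.map τ = Ideal.map τ S ⊔ Ideal.map τ (C ⊓ I) := by rw [← Ideal.map_sup, ← hI]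
  exact ⟨.ofEq _ _ hI ≪≫ₗ (Submodule.prodEquivOfDisjoint hdisj).symm ≪≫ₗ eS.prodCongr eC ≪≫ₗ
    Submodule.prodEquivOfDisjoint hdisj' ≪≫ₗ .ofEq _ _ hI'.symm⟩

theorem Ideal.exists_unit_of_linearEquiv_map {I : Ideal A} (f : I ≃ₗ[A] I.map τ) :
    ∃ u : Aˣ, ∀ z : I, (f z : A) = z * u := by
  obtain ⟨C, hC⟩ := exists_isCompl I
  obtain ⟨g⟩ := Ideal.nonempty_linearEquiv_map τ hτ C
  exact Ideal.exists_unit_of_isCompl hC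
    ((Ideal.relIsoOfBijective (τ : A →+* A) τ.bijective).symm.isCompl hC) f g

theorem RingEquiv.exists_unit_span_mul_eq_span_apply (x : A) :
    ∃ u : Aˣ, Ideal.span {x * u} = Ideal.span {τ x} := by
  obtain ⟨f⟩ := Ideal.nonempty_linearEquiv_map τ hτ (Ideal.span {x})
  obtain ⟨u, hu⟩ := Ideal.exists_unit_of_linearEquiv_map τ hτ f
  have hmap : Ideal.map τ (Ideal.span {x}) = Ideal.span {τ x} := by
    rw [Ideal.map_span, Set.image_singleton]
  refine ⟨u, le_antisymm ?_ fun w hw => ?_⟩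
  · rw [Ideal.span_singleton_le_iff_mem, ← hmap, ← hu ⟨x, Ideal.mem_span_singleton_self x⟩]
    exact (f _).2
  · obtain ⟨z, hz⟩ := f.surjective ⟨w, hmap ▸ hw⟩
    obtain ⟨a, ha⟩ := Ideal.mem_span_singleton'.mp z.2
    refine Ideal.mem_span_singleton'.mpr ⟨a, ?_⟩
    rw [← mul_assoc, ha, ← hu, hz]

theorem RingEquiv.exists_unit_eq_mul_of_span_eq_map {x y c d : A} (hc : y = x * c) (hd : x = y * d)
    (h : Ideal.span {y} = (Ideal.span {x}).map τ) : ∃ u : Aˣ, y = x * u := by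
  have mem : ∀ {p q r : A}, q = p * r → ∀ z ∈ Ideal.span {p}, z * r ∈ Ideal.span {q} :=
    fun hq z hz => by
      obtain ⟨a, rfl⟩ := Ideal.mem_span_singleton'.mp hz
      exact Ideal.mem_span_singleton'.mpr ⟨a, by rw [mul_assoc, hq]⟩
  have cancel : ∀ {p q r s : A}, q = p * r → p = q * s → ∀ z ∈ Ideal.span {p}, z * r * s = z :=
    fun {p _ r _} hq hp z hz => by
      obtain ⟨a, rfl⟩ := Ideal.mem_span_singleton'.mp hz
      rw [mul_assoc, mul_assoc, ← mul_assoc p r, ← hq, ← hp]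
  let f : Ideal.span {x} ≃ₗ[A] Ideal.span {y} := .ofLinearMap
    ((LinearMap.toSpanSingleton A A c).restrict (mem hc))
    ((LinearMap.toSpanSingleton A A d).restrict (mem hd))
    (LinearMap.ext fun z => Subtype.ext (cancel hd hc z z.2))
    (LinearMap.ext fun z => Subtype.ext (cancel hc hd z z.2))
  obtain ⟨u, hu⟩ := Ideal.exists_unit_of_linearEquiv_map τ hτ (f.trans (.ofEq _ _ h))
  exact ⟨u, hc.trans (hu ⟨x, Ideal.mem_span_singleton_self x⟩)⟩

theorem RingEquiv.exists_units_apply_eq_mul_mul (b : A) : ∃ u v : Aˣ, τ b = u * b * v := by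
  obtain ⟨v, hv⟩ := τ.exists_unit_span_mul_eq_span_apply hτ b
  obtain ⟨c, hc⟩ := Ideal.mem_span_singleton'.mp (hv ▸ Ideal.mem_span_singleton_self (τ b))
  obtain ⟨d, hd⟩ := Ideal.mem_span_singleton'.mp (hv.symm ▸ Ideal.mem_span_singleton_self (b * v))
  have hτop : ∀ z ∈ Set.center Aᵐᵒᵖ, RingEquiv.op τ z = z := fun z hz =>
    MulOpposite.unop_injective (hτ _ (MulOpposite.unop_mem_center_iff.mpr hz))
  -- `A (b * v) = A (τ b)` only makes `b * v` and `τ b` left associates; read in `Aᵐᵒᵖ`, the same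
  -- data satisfies the hypotheses of `exists_unit_eq_mul_of_span_eq_map`, which yields a unit.
  obtain ⟨u, hu⟩ := (RingEquiv.op τ).exists_unit_eq_mul_of_span_eq_map hτop
    (x := .op (b * v)) (y := .op (τ b)) (c := .op c) (d := .op d)
    (by rw [← MulOpposite.op_mul, hc]) (by rw [← MulOpposite.op_mul, hd]) (by
      rw [Ideal.map_span, Set.image_singleton, RingEquiv.op_apply_apply, MulOpposite.unop_op,
        map_mul, MulOpposite.op_mul,
        Ideal.span_singleton_mul_left_unit ((v.isUnit.map τ).op)])
  refine ⟨(Units.opEquiv u).unop, v, ?_⟩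
  rw [Units.coe_unop_opEquiv, mul_assoc, ← MulOpposite.unop_op (τ b), hu, MulOpposite.unop_mul,
    MulOpposite.unop_op]

end Semisimple

section InvariantSums

variable {R M : Type*} [Monoid R] [DecidableEq R] [AddCommMonoid M] {P : Finset R}

theorem Finset.sum_units_mul_mul {u v : Rˣ} (hu : P.image (fun a => (u : R) * a) = P)
    (hv : P.image (fun a => a * (v : R)) = P) (f : R → M) :
    ∑ a ∈ P, f (u * a * v) = ∑ a ∈ P, f a := calc
  ∑ a ∈ P, f (u * a * v) = ∑ a ∈ P.image (fun a => (u : R) * a), f (a * v) :=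
    (sum_image (f := fun a => f (a * v)) fun _ _ _ _ h => u.isUnit.mul_right_injective h).symm
  _ = ∑ a ∈ P.image (fun a => a * (v : R)), f a := by
    rw [hu]
    exact (sum_image fun _ _ _ _ h => v.isUnit.mul_left_injective h).symm
  _ = ∑ a ∈ P, f a := by rw [hv]

end InvariantSums

theorem krawtchouk_sums_symmetric_of_invariant_semisimple
    {R : Type*} [Ring R] [Fintype R] [DecidableEq R] [IsSemisimpleRing R]
    (χ : AddChar R ℂˣ)
    (hχ : ∀ ψ : AddChar R ℂˣ, ∃ r : R, ∀ x : R, ψ x = χ (x * r))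
    (P : Finset R)
    (hP : ∀ u : Rˣ, P.image (fun a => (u : R) * a) = P ∧ P.image (fun a => a * (u : R)) = P)
    (b : R) :
    ∑ a ∈ P, ((χ (a * b) : ℂˣ) : ℂ) = ∑ a ∈ P, ((χ (b * a) : ℂˣ) : ℂ) := by
  let σ := AddChar.nakayamaEquiv hχ
  obtain ⟨u, v, huv⟩ :=
    σ.exists_units_apply_eq_mul_mul (fun _ => AddChar.nakayama_of_mem_center hχ) b
  let w : Rˣ := v.map σ.symm.toMonoidHom
  have hw : σ w = v := σ.apply_symm_apply v
  have key : ∀ a, χ (b * a) = χ (w * a * u * b) := fun a => calc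
    χ (b * a) = χ (a * σ b) := AddChar.apply_mul_eq_apply_mul_nakayama hχ b a
    _ = χ (a * u * b * σ w) := by rw [huv, hw, mul_assoc, mul_assoc, mul_assoc]
    _ = χ (w * (a * u * b)) := (AddChar.apply_mul_eq_apply_mul_nakayama hχ w _).symm
    _ = χ (w * a * u * b) := by simp only [mul_assoc]
  calc ∑ a ∈ P, ((χ (a * b) : ℂˣ) : ℂ) = ∑ a ∈ P, ((χ (w * a * u * b) : ℂˣ) : ℂ) :=
        (Finset.sum_units_mul_mul (hP w).1 (hP u).2 fun a => ((χ (a * b) : ℂˣ) : ℂ)).symm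
    _ = ∑ a ∈ P, ((χ (b * a) : ℂˣ) : ℂ) := Finset.sum_congr rfl fun a _ => by rw [key a]
end

section
/- Let F be a finite field, m a positive integer, R = Matrix (Fin m) (Fin m) F, and let χ be a generating character of R. Then for all B, B' ∈ R: rank(B) = rank(B') if and only if for every j with 0 ≤ j ≤ m, ∑_{A ∈ R, rank(A) = j} χ(A*B) = ∑_{A ∈ R, rank(A) = j} χ(A*B'). (Equivalently, the homogeneous weight partition of R, which coincides with the rank partition, is self-dual with respect to character-theoretic dualization.) -/
/-!
Fix a primitive additive character `ψ` of `F`. The trace characters `X ↦ ψ(tr(X D))` are pairwise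
distinct, so a generating character `χ` is itself one of them, `χ(X) = ψ(tr(X U))`, and `U` is
invertible. Then `χ(Y V) = χ(U⁻¹ V U Y)`, so the rank-class sums `S_j(N) = ∑_{rank A = j} χ(A N)`
are unchanged under `N ↦ P N Q` for invertible `P, Q`; since matrices of equal rank are
equivalent, `S_j(N)` depends only on `rank N`. Conversely, orthogonality of the trace characters
gives `∑_X S_r(X) χ(X C) = |Mₘ(F)| · [rank C = r]`, and because `S_r` is constant on rank classes
the left-hand side is a combination of the numbers `S_j(C)`; so these numbers determine `rank C`.
-/

open Finset

theorem Fintype.sum_mul_eq_of_sum_fiberwise_eq {α β R : Type*} [Fintype α] [DecidableEq β]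
    [CommSemiring R] {s : Finset β} {κ : α → β} (hκ : ∀ x, κ x ∈ s) {f u v : α → R}
    (hf : ∀ x y, κ x = κ y → f x = f y)
    (huv : ∀ b ∈ s, ∑ x with κ x = b, u x = ∑ x with κ x = b, v x) :
    ∑ x, f x * u x = ∑ x, f x * v x := by
  rw [← sum_fiberwise_of_maps_to (fun x _ => hκ x), ← sum_fiberwise_of_maps_to (fun x _ => hκ x)]
  refine Finset.sum_congr rfl fun b hb => ?_
  rcases Finset.eq_empty_or_nonempty {x | κ x = b} with hempty | ⟨x₀, hx₀⟩
  · simp only [hempty, Finset.sum_empty]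
  · have hf₀ : ∀ x ∈ ({x | κ x = b} : Finset α), f x = f x₀ := fun x hx =>
      hf x x₀ ((mem_filter.mp hx).2.trans (mem_filter.mp hx₀).2.symm)
    calc ∑ x with κ x = b, f x * u x = ∑ x with κ x = b, f x₀ * u x :=
          Finset.sum_congr rfl fun x hx => by rw [hf₀ x hx]
      _ = ∑ x with κ x = b, f x₀ * v x := by rw [← Finset.mul_sum, ← Finset.mul_sum, huv b hb]
      _ = ∑ x with κ x = b, f x * v x := Finset.sum_congr rfl fun x hx => by rw [hf₀ x hx]

namespace Matrix

variable {F : Type*} [Field F] {n : Type*} [Fintype n]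

section Equivalence

variable [DecidableEq n]

theorem rank_units_mul_mul (P Q : (Matrix n n F)ˣ) (A : Matrix n n F) :
    ((P : Matrix n n F) * A * Q).rank = A.rank := by
  rw [rank_mul_eq_left_of_isUnit_det _ _ ((isUnit_iff_isUnit_det _).mp Q.isUnit),
    rank_mul_eq_right_of_isUnit_det _ _ ((isUnit_iff_isUnit_det _).mp P.isUnit)]

theorem exists_units_mul_submatrix_mul_eq {ι : Type*} (A : Matrix ι ι F) (e e' : n ≃ ι) :
    ∃ P Q : (Matrix n n F)ˣ, (P : Matrix n n F) * A.submatrix e e * Q = A.submatrix e' e' := by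
  let σ : Equiv.Perm n := e'.trans e.symm
  refine ⟨(permMatrixHom (R := F)).toHomUnits σ⁻¹, (permMatrixHom (R := F)).toHomUnits σ, ?_⟩
  simp only [MonoidHom.coe_toHomUnits, permMatrixHom_apply, inv_inv, Equiv.Perm.permMatrix,
    PEquiv.toMatrix_toPEquiv_mul, PEquiv.mul_toMatrix_toPEquiv, submatrix_submatrix]
  congr 1 <;> funext x <;> simp [σ, Equiv.Perm.inv_def]

theorem exists_units_mul_mul_eq_of_rank_eq {A B : Matrix n n F} (h : A.rank = B.rank) :
    ∃ P Q : (Matrix n n F)ˣ, (P : Matrix n n F) * A * Q = B := by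
  obtain ⟨V, U, e, ⟨V, rfl⟩, ⟨U, rfl⟩, hA⟩ := exists_rank_normal_form A
  obtain ⟨V', U', e', ⟨V', rfl⟩, ⟨U', rfl⟩, hB⟩ := exists_rank_normal_form B
  revert e'
  rw [← h]
  intro e' hB
  obtain ⟨P, Q, hPQ⟩ := exists_units_mul_submatrix_mul_eq (fromBlocks 1 0 0 0 : Matrix _ _ F) e e'
  refine ⟨V'⁻¹ * P * V, U * Q * U'⁻¹, ?_⟩
  calc ((V'⁻¹ * P * V : (Matrix n n F)ˣ) : Matrix n n F) * A * ↑(U * Q * U'⁻¹)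
      = ↑V'⁻¹ * (↑P * (↑V * A * ↑U) * ↑Q) * ↑U'⁻¹ := by
        simp only [Units.val_mul, Matrix.mul_assoc]
    _ = ↑V'⁻¹ * (↑V' * B * ↑U') * ↑U'⁻¹ := by rw [hA, hPQ, hB]
    _ = B := by simp [Matrix.mul_assoc]

end Equivalence

section TraceChar

variable {M : Type*} [CommMonoid M]

def traceChar (ψ : AddChar F M) (D : Matrix n n F) : AddChar (Matrix n n F) M :=
  ψ.compAddMonoidHom ((traceAddMonoidHom n F).comp (AddMonoidHom.mulRight D))

@[simp]
theorem traceChar_apply (ψ : AddChar F M) (D X : Matrix n n F) :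
    traceChar ψ D X = ψ (X * D).trace :=
  rfl

theorem traceChar_apply_mul_left (ψ : AddChar F M) (D A X : Matrix n n F) :
    traceChar ψ D (A * X) = traceChar ψ (D * A) X := by
  simp only [traceChar_apply, Matrix.mul_assoc, trace_mul_comm A]

theorem traceChar_apply_mul_right (ψ : AddChar F M) (D X C : Matrix n n F) :
    traceChar ψ D (X * C) = traceChar ψ (C * D) X := by
  simp only [traceChar_apply, Matrix.mul_assoc]

theorem traceChar_apply_mul_of_mul_eq {ψ : AddChar F M} {D V W : Matrix n n F}
    (h : D * W = V * D) (Y : Matrix n n F) :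
    traceChar ψ D (Y * V) = traceChar ψ D (W * Y) := by
  rw [traceChar_apply_mul_right, traceChar_apply_mul_left, h]

theorem traceChar_add (ψ : AddChar F M) (D D' : Matrix n n F) :
    traceChar ψ (D + D') = traceChar ψ D * traceChar ψ D' := by
  ext X
  simp only [traceChar_apply, AddChar.mul_apply, Matrix.mul_add, trace_add,
    AddChar.map_add_eq_mul]

variable [DecidableEq n]

theorem traceChar_eq_one_iff {ψ : AddChar F M} (hψ : ψ.IsPrimitive) {D : Matrix n n F} :
    traceChar ψ D = 1 ↔ D = 0 := by
  refine ⟨fun h => ?_, fun h => by ext X; simp [h]⟩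
  by_contra hD
  obtain ⟨i, j, hij⟩ : ∃ i j, D i j ≠ 0 := by simpa [← Matrix.ext_iff] using hD
  obtain ⟨t, ht⟩ := AddChar.ne_one_iff.mp (hψ hij)
  apply ht
  simpa [trace_single_mul, mul_comm t] using DFunLike.congr_fun h (single j i t)

theorem traceChar_injective {ψ : AddChar F M} (hψ : ψ.IsPrimitive) :
    Function.Injective (traceChar ψ : Matrix n n F → AddChar (Matrix n n F) M) := by
  intro D D' h
  rw [← sub_eq_zero, ← traceChar_eq_one_iff hψ, ← mul_eq_right (b := traceChar ψ D'),
    ← traceChar_add, sub_add_cancel, h]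

theorem sum_traceChar [Fintype F] [DecidableEq F] {R : Type*} [CommRing R] [IsDomain R]
    {ψ : AddChar F R} (hψ : ψ.IsPrimitive) (D : Matrix n n F) :
    ∑ X, traceChar ψ D X = if D = 0 then (Fintype.card (Matrix n n F) : R) else 0 := by
  classical
  rw [AddChar.sum_eq_ite, ← AddChar.one_eq_zero]
  exact if_congr (traceChar_eq_one_iff hψ) rfl rfl

theorem exists_unit_eq_traceChar [Finite F] {ψ : AddChar F M} (hψ : ψ.IsPrimitive)
    (χ : AddChar (Matrix n n F) M)
    (hχ : ∀ φ : AddChar (Matrix n n F) M, ∃ N, ∀ X, φ X = χ (X * N)) :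
    ∃ U : (Matrix n n F)ˣ, χ = traceChar ψ U := by
  choose N hN using fun D => hχ (traceChar ψ D)
  -- `N` is injective, hence onto the finite ring; its value `1` is attained at the wanted `U`.
  have hN_inj : Function.Injective N := fun D D' h =>
    traceChar_injective hψ <| DFunLike.ext _ _ fun X => by rw [hN, hN, h]
  obtain ⟨U, hU⟩ := Finite.injective_iff_surjective.mp hN_inj 1
  have hχU : χ = traceChar ψ U := DFunLike.ext _ _ fun X => by rw [hN, hU, Matrix.mul_one]
  have hNU : N 1 * U = 1 := traceChar_injective hψ <| DFunLike.ext _ _ fun X => by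
    rw [← traceChar_apply_mul_right, ← hχU, ← hN]
  exact ⟨⟨U, N 1, mul_eq_one_comm.mp hNU, hNU⟩, hχU⟩

end TraceChar

section RankClassSum

variable [Fintype F] [DecidableEq n] {R : Type*} [CommRing R]

noncomputable def rankClassSum (χ : AddChar (Matrix n n F) R) (j : ℕ) (N : Matrix n n F) : R :=
  ∑ A with A.rank = j, χ (A * N)

theorem rankClassSum_units_mul_mul (ψ : AddChar F R) (U P Q : (Matrix n n F)ˣ) (j : ℕ)
    (N : Matrix n n F) :
    rankClassSum (traceChar ψ (U : Matrix n n F)) j ((P : Matrix n n F) * N * Q)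
      = rankClassSum (traceChar ψ (U : Matrix n n F)) j N := by
  rw [rankClassSum, rankClassSum, sum_filter, sum_filter]
  refine Fintype.sum_equiv ((Units.mulRight P).trans (Units.mulLeft (U⁻¹ * Q * U))) _ _
    fun A => ?_
  simp only [Equiv.trans_apply, Units.mulRight_apply, Units.mulLeft_apply, ← Matrix.mul_assoc,
    rank_units_mul_mul]
  rw [traceChar_apply_mul_of_mul_eq (W := ↑(U⁻¹ * Q * U)) (by simp [Matrix.mul_assoc])]
  simp only [Matrix.mul_assoc]

theorem rankClassSum_eq_of_rank_eq (ψ : AddChar F R) (U : (Matrix n n F)ˣ) (j : ℕ)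
    {N N' : Matrix n n F} (h : N.rank = N'.rank) :
    rankClassSum (traceChar ψ (U : Matrix n n F)) j N
      = rankClassSum (traceChar ψ (U : Matrix n n F)) j N' := by
  obtain ⟨P, Q, rfl⟩ := exists_units_mul_mul_eq_of_rank_eq h
  exact (rankClassSum_units_mul_mul ψ U P Q j N).symm

variable [IsDomain R]

theorem sum_rankClassSum_mul_traceChar {ψ : AddChar F R} (hψ : ψ.IsPrimitive)
    (U : (Matrix n n F)ˣ) (r : ℕ) (C : Matrix n n F) :
    ∑ X, rankClassSum (traceChar ψ (U : Matrix n n F)) r X * traceChar ψ (U : Matrix n n F) (X * C)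
      = if C.rank = r then (Fintype.card (Matrix n n F) : R) else 0 := by
  classical
  have hdual : ∀ A, ∑ X, traceChar ψ (U : Matrix n n F) (A * X)
        * traceChar ψ (U : Matrix n n F) (X * C)
      = if A = ((-U⁻¹ : (Matrix n n F)ˣ) : Matrix n n F) * C * U
        then (Fintype.card (Matrix n n F) : R) else 0 := by
    intro A
    have hprod : ∀ X, traceChar ψ (U : Matrix n n F) (A * X)
          * traceChar ψ (U : Matrix n n F) (X * C)
        = traceChar ψ ((U : Matrix n n F) * A + C * (U : Matrix n n F)) X := fun X => by
      rw [traceChar_apply_mul_left, traceChar_apply_mul_right, ← AddChar.mul_apply,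
        ← traceChar_add]
    simp only [hprod, sum_traceChar hψ]
    refine if_congr ?_ rfl rfl
    rw [add_eq_zero_iff_eq_neg, Units.val_neg, Matrix.mul_assoc, neg_mul,
      ← mul_neg ((U⁻¹ : (Matrix n n F)ˣ) : Matrix n n F), Units.eq_inv_mul_iff_mul_eq]
  simp only [rankClassSum, sum_mul]
  rw [sum_comm]
  simp only [hdual, sum_ite_eq', mem_filter, mem_univ, true_and, rank_units_mul_mul]

theorem rank_eq_of_rankClassSum_eq [CharZero R] {ψ : AddChar F R} (hψ : ψ.IsPrimitive)
    (U : (Matrix n n F)ˣ) {B B' : Matrix n n F}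
    (h : ∀ j ≤ Fintype.card n, rankClassSum (traceChar ψ (U : Matrix n n F)) j B
      = rankClassSum (traceChar ψ (U : Matrix n n F)) j B') :
    B.rank = B'.rank := by
  have key := Fintype.sum_mul_eq_of_sum_fiberwise_eq (s := Iic (Fintype.card n))
    (fun X => mem_Iic.mpr (rank_le_card_width X))
    (f := rankClassSum (traceChar ψ (U : Matrix n n F)) B.rank)
    (fun X Y hXY => rankClassSum_eq_of_rank_eq ψ U B.rank hXY)
    (fun j hj => h j (mem_Iic.mp hj))
  rw [sum_rankClassSum_mul_traceChar hψ, sum_rankClassSum_mul_traceChar hψ, if_pos rfl] at key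
  by_contra hne
  rw [if_neg (Ne.symm hne)] at key
  exact Fintype.card_ne_zero (Nat.cast_eq_zero.mp key)

end RankClassSum

end Matrix

theorem rank_partition_self_dual_general
    {F : Type*} [Field F] [Fintype F] (m : ℕ)
    (χ : AddChar (Matrix (Fin m) (Fin m) F) ℂˣ)
    (hχ : ∀ ψ : AddChar (Matrix (Fin m) (Fin m) F) ℂˣ,
      ∃ M : Matrix (Fin m) (Fin m) F, ∀ X : Matrix (Fin m) (Fin m) F, ψ X = χ (X * M))
    (B B' : Matrix (Fin m) (Fin m) F) :
    B.rank = B'.rank ↔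
      ∀ j : ℕ, j ≤ m →
        ∑ A ∈ (Set.toFinite {A : Matrix (Fin m) (Fin m) F | A.rank = j}).toFinset,
            ((χ (A * B) : ℂˣ) : ℂ)
          = ∑ A ∈ (Set.toFinite {A : Matrix (Fin m) (Fin m) F | A.rank = j}).toFinset,
              ((χ (A * B') : ℂˣ) : ℂ) := by
  have hψ := AddChar.FiniteField.primitiveChar_to_Complex_isPrimitive F
  have hsum : ∀ j N, ∑ A ∈ (Set.toFinite {A : Matrix (Fin m) (Fin m) F | A.rank = j}).toFinset,
      ((χ (A * N) : ℂˣ) : ℂ) = Matrix.rankClassSum ((Units.coeHom ℂ).compAddChar χ) j N :=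
    fun j N => by rw [Set.Finite.toFinset_ofPred]; rfl
  obtain ⟨U, hU⟩ := Matrix.exists_unit_eq_traceChar hψ ((Units.coeHom ℂ).compAddChar χ) fun φ => by
    obtain ⟨N, hN⟩ := hχ (AddChar.toMonoidHomEquiv.symm φ.toMonoidHom.toHomUnits)
    exact ⟨N, fun X => congrArg Units.val (hN X)⟩
  simp only [hsum, hU]
  exact ⟨fun h j _ => Matrix.rankClassSum_eq_of_rank_eq _ U j h,
    fun h => Matrix.rank_eq_of_rankClassSum_eq hψ U (by simpa using h)⟩

theorem rank_partition_self_dual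
    {F : Type*} [Field F] [Fintype F] (m : ℕ) (hm : 0 < m)
    (χ : AddChar (Matrix (Fin m) (Fin m) F) ℂˣ)
    (hχ : ∀ ψ : AddChar (Matrix (Fin m) (Fin m) F) ℂˣ,
      ∃ M : Matrix (Fin m) (Fin m) F, ∀ X : Matrix (Fin m) (Fin m) F, ψ X = χ (X * M))
    (B B' : Matrix (Fin m) (Fin m) F) :
    B.rank = B'.rank ↔
      ∀ j : ℕ, j ≤ m →
        ∑ A ∈ (Set.toFinite {A : Matrix (Fin m) (Fin m) F | A.rank = j}).toFinset,
            ((χ (A * B) : ℂˣ) : ℂ)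
          = ∑ A ∈ (Set.toFinite {A : Matrix (Fin m) (Fin m) F | A.rank = j}).toFinset,
              ((χ (A * B') : ℂˣ) : ℂ) :=
  rank_partition_self_dual_general m χ hχ B B'
end
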